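/- arXiv:1307.2828 — 11 statements merged into one kernel-verified Lean document; each statement's English description precedes it below -/
import Mathlib

section
/- If an infinite word s admits a prefixal factorization s = U₁U₂⋯ (each Uᵢ a non-empty prefix of s), then there exist indices i with |Uᵢ| ≤ |U_{i+1}|, and consequently s contains a square (a factor of the form vv with v non-empty). -/
variable {A B : Type}

/-- The finite word `u` occurs in the infinite word `x` at position `k`. -/
def FactorAt (u : List A) (x : ℕ → A) (k : ℕ) : Prop :=
  u = (List.range u.length).map fun i => x (k + i)

/-- `u` is a factor of the infinite word `x`. -/
def IsFactorOf (u : List A) (x : ℕ → A) : Prop :=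
  ∃ k, FactorAt u x k

/-- `u` is a prefix of the infinite word `x`. -/
def IsPrefixOf (u : List A) (x : ℕ → A) : Prop :=
  FactorAt u x 0

/-- Starting position of the `n`-th block in the factorization `U`. -/
def facPos (U : ℕ → List A) : ℕ → ℕ
  | 0 => 0
  | n + 1 => facPos U n + (U n).length

/-- `x = U 0 ++ U 1 ++ U 2 ++ ⋯` with all blocks non-empty. -/
def IsFactorizationOf (U : ℕ → List A) (x : ℕ → A) : Prop :=
  (∀ n, U n ≠ []) ∧ ∀ n, FactorAt (U n) x (facPos U n)

/-- A factorization of `x` into non-empty prefixes of `x`. -/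
def IsPrefixalFactorizationOf (U : ℕ → List A) (x : ℕ → A) : Prop :=
  IsFactorizationOf U x ∧ ∀ n, IsPrefixOf (U n) x

/-- `x` admits a finite coloring of its factors with no monochromatic factorization. -/
def InP (x : ℕ → A) : Prop :=
  ∃ (C : Type) (_ : Fintype C) (c : List A → C),
    ∀ U : ℕ → List A, IsFactorizationOf U x → ∃ i j, c (U i) ≠ c (U j)


lemma factorAt_iff {u : List A} {x : ℕ → A} {k : ℕ} :
    FactorAt u x k ↔ ∀ j (hj : j < u.length), u[j] = x (k + j) := by
  constructor
  · intro hf j hj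
    rw [List.getElem_of_eq hf hj]
    simp
  · intro hp
    apply List.ext_getElem
    · simp
    · intro j h1 h2
      simpa using hp j h1

theorem prefixal_factorization_ascent_and_square
    (s : ℕ → A) (U : ℕ → List A) (h : IsPrefixalFactorizationOf U s) :
    (∃ i, (U i).length ≤ (U (i + 1)).length) ∧
      ∃ v : List A, v ≠ [] ∧ IsFactorOf (v ++ v) s := by

  obtain ⟨⟨hne, hfac⟩, hpre⟩ := h
  have asc : ∃ i, (U i).length ≤ (U (i + 1)).length := by
    by_contra hc
    push_neg at hc
    have key : ∀ n, (U n).length + n ≤ (U 0).length := by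
      intro n
      induction n with
      | zero => simp
      | succ m ih =>
        have := hc m
        omega
    have := key ((U 0).length)
    have h1 : 0 < (U ((U 0).length)).length := List.length_pos_iff.mpr (hne _)
    omega
  refine ⟨asc, ?_⟩
  obtain ⟨i, hi⟩ := asc
  set v := U i with hv
  set L := v.length with hL
  refine ⟨v, hne i, facPos U i, ?_⟩
  rw [factorAt_iff]
  intro j hj
  have hjlen : j < 2 * L := by simpa [two_mul] using hj
  have hfi := factorAt_iff.mp (hfac i)
  have hfi1 := factorAt_iff.mp (hfac (i + 1))
  have hpi := factorAt_iff.mp (hpre i)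
  have hpi1 := factorAt_iff.mp (hpre (i + 1))
  by_cases hc : j < L
  · rw [List.getElem_append_left (by omega)]
    exact hfi j hc
  · have hjL : j - L < L := by omega
    rw [List.getElem_append_right (by omega)]
    have h1 : v[j - L] = s (j - L) := by simpa using hpi (j - L) hjL
    have h2 : (U (i+1))[j - L]'(by omega) = s (j - L) := by
      simpa using hpi1 (j - L) (by omega)
    have h3 : (U (i+1))[j - L]'(by omega) = s (facPos U (i+1) + (j - L)) :=
      hfi1 (j - L) (by omega)
    have h4 : facPos U (i+1) = facPos U i + L := rfl
    have h5 : facPos U i + L + (j - L) = facPos U i + j := by omega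
    rw [h1, ← h2, h3, h4, h5]
end

section
/- If an infinite word x admits a prefixal factorization, then the first letter of x is uniformly recurrent in x, i.e., there is an integer k such that every factor of x of length k contains an occurrence of the first letter of x. -/
variable {A B : Type}

lemma key_factor_prefix {u : List A} {x : ℕ → A} {p : ℕ} (hf : FactorAt u x p)
    (hp : IsPrefixOf u x) {i : ℕ} (hi : i < u.length) : x (p + i) = x i := by
  have h1 := congrArg (fun l => l[i]?) hf
  have h2 := congrArg (fun l => l[i]?) hp
  simp [hi] at h1 h2
  rw [h1] at h2
  exact h2

lemma facPos_ge (U : ℕ → List A) (hne : ∀ n, U n ≠ []) (n : ℕ) : n ≤ facPos U n := by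
  induction n with
  | zero => simp [facPos]
  | succ n ih =>
    have : 1 ≤ (U n).length := List.length_pos_iff.mpr (hne n)
    simp only [facPos]
    omega

theorem prefixal_factorization_first_letter_uniformly_recurrent
    (x : ℕ → A) (U : ℕ → List A) (h : IsPrefixalFactorizationOf U x) :
    ∃ k : ℕ, ∀ m : ℕ, ∃ i < k, x (m + i) = x 0 := by
  obtain ⟨⟨hne, hfac⟩, hpre⟩ := h
  refine ⟨(U 0).length, ?_⟩
  have hk0 : 0 < (U 0).length := List.length_pos_iff.mpr (hne 0)
  intro m
  induction m using Nat.strong_induction_on with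
  | _ m ih =>
    by_contra hcon
    push_neg at hcon
    -- find the block containing position m
    have hex : ∃ n, m < facPos U n :=
      ⟨m + 1, lt_of_lt_of_le (Nat.lt_succ_self m) (facPos_ge U hne (m+1))⟩
    have hNlt : m < facPos U (Nat.find hex) := Nat.find_spec hex
    have hN1 : Nat.find hex ≠ 0 := by
      intro h0
      rw [h0] at hNlt
      simp [facPos] at hNlt
    obtain ⟨n, hn⟩ := Nat.exists_eq_succ_of_ne_zero hN1
    rw [hn] at hNlt
    have hple : facPos U n ≤ m := by
      have := Nat.find_min hex (m := n) (hn ▸ Nat.lt_succ_self n)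
      omega
    -- every block start carries the letter x 0
    have hstart : ∀ j, x (facPos U j) = x 0 := fun j => by
      have := key_factor_prefix (hfac j) (hpre j) (List.length_pos_iff.mpr (hne j)) (i := 0)
      simpa using this
    -- so facPos U (n+1) cannot lie in [m, m + k)
    have hfar : m + (U 0).length ≤ facPos U (n+1) := by
      by_contra hlt
      push_neg at hlt
      have : ∃ i < (U 0).length, x (m + i) = x 0 :=
        ⟨facPos U (n+1) - m, by omega, by rw [Nat.add_sub_cancel' (le_of_lt hNlt)]; exact hstart (n+1)⟩
      obtain ⟨i, hi1, hi2⟩ := this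
      exact hcon i hi1 hi2
    have hlen : facPos U (n+1) = facPos U n + (U n).length := rfl
    rcases Nat.eq_zero_or_pos (facPos U n) with hz | hpos
    · -- m lies in block 0's range: then m = 0 and x m = x 0
      have hm0 : m = 0 := by
        have h1 : facPos U 1 = (U 0).length := by simp [facPos]
        have := Nat.find_spec hex
        rcases Nat.lt_or_ge n 1 with h' | h'
        · interval_cases n
          · rw [h1] at hfar; omega
        · have hle : (U 0).length ≤ facPos U n := by
            calc (U 0).length = facPos U 1 := h1.symm
            _ ≤ facPos U n := by
              clear * - h'
              induction n with
              | zero => omega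
              | succ n ih =>
                rcases Nat.lt_or_ge n 1 with h'' | h''
                · interval_cases n
                  · simp [facPos]
                · exact le_trans (ih h'') (Nat.le_add_right _ _)
          omega
      exact hcon 0 hk0 (by rw [hm0])
    · -- recurse at m - facPos U n
      obtain ⟨i, hik, hieq⟩ := ih (m - facPos U n) (by omega)
      have hlt : (m - facPos U n) + i < (U n).length := by omega
      have := key_factor_prefix (hfac n) (hpre n) hlt
      have hx : x (m + i) = x 0 := by
        rw [show m + i = facPos U n + ((m - facPos U n) + i) by omega, this, hieq]
      exact hcon i hik hx
end

section
/- If an infinite word x over a finite alphabet has full complexity (every non-empty finite word over A is a factor of x) and uses more than one letter, then x does not admit a prefixal factorization. -/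
variable {A B : Type}

lemma factorAt_get {u : List A} {x : ℕ → A} {k : ℕ} (h : FactorAt u x k)
    {i : ℕ} (hi : i < u.length) : u[i] = x (k + i) := by
  rw [List.getElem_of_eq h hi]
  simp

lemma facPos_lt {U : ℕ → List A} (hne : ∀ n, U n ≠ []) (n : ℕ) :
    facPos U n < facPos U (n + 1) := by
  have : 0 < (U n).length := List.length_pos_iff.mpr (hne n)
  simp [facPos]
  omega

lemma le_facPos {U : ℕ → List A} (hne : ∀ n, U n ≠ []) (n : ℕ) :
    n ≤ facPos U n := by
  induction n with
  | zero => simp [facPos]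
  | succ m ih => have := facPos_lt hne m; omega

theorem full_complexity_no_prefixal_factorization
    (x : ℕ → A) (hfull : ∀ u : List A, u ≠ [] → IsFactorOf u x)
    (htwo : ∃ i j, x i ≠ x j) :
    ¬ ∃ U : ℕ → List A, IsPrefixalFactorizationOf U x := by
  classical
  rintro ⟨U, ⟨⟨hne, hfac⟩, hpref⟩⟩
  -- a letter distinct from x 0
  obtain ⟨b, hb⟩ : ∃ b : A, b ≠ x 0 := by
    obtain ⟨i, j, hij⟩ := htwo
    by_cases h : x i = x 0
    · exact ⟨x j, fun hj => hij (by rw [h, hj])⟩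
    · exact ⟨x i, h⟩
  -- copying lemma: inside block n, x repeats its prefix
  have hcopy : ∀ n t, t < (U n).length → x (facPos U n + t) = x t := by
    intro n t ht
    have h1 := factorAt_get (hfac n) ht
    have h2 := factorAt_get (hpref n) ht
    rw [← h1, h2]
    simp
  -- the long b-block
  set m := (U 0).length + 1 with hm
  set w : List A := List.replicate m b with hwdef
  have hwlen : w.length = m := by simp [hwdef]
  have hwget : ∀ t (ht : t < w.length), w[t] = b := by
    intro t ht; simp [hwdef]
  have hwex : ∃ k, FactorAt w x k := hfull w (by simp [hwdef, hm])
  set k := Nat.find hwex with hkdef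
  have hk : FactorAt w x k := Nat.find_spec hwex
  have hmin : ∀ k' < k, ¬ FactorAt w x k' := fun k' h => Nat.find_min hwex h
  have hkb : ∀ t, t < m → x (k + t) = b := by
    intro t ht
    have := factorAt_get hk (by omega : t < w.length)
    rw [← this, hwget t (by omega)]
  -- k = 0 is impossible
  have hk0 : k ≠ 0 := by
    intro h0
    have := hkb 0 (by omega)
    rw [h0] at this
    exact hb this.symm
  -- find the block containing position k
  have hPex : ∃ n, k < facPos U n := ⟨k + 1, by have := le_facPos hne (k + 1); omega⟩
  have hn10 : Nat.find hPex ≠ 0 := by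
    intro h
    have := Nat.find_spec hPex
    rw [h] at this; simp [facPos] at this
  set n := Nat.find hPex - 1 with hn
  have hsucc : Nat.find hPex = n + 1 := by omega
  have hn1spec : k < facPos U (n + 1) := hsucc ▸ Nat.find_spec hPex
  have hple : facPos U n ≤ k := by
    have := Nat.find_min hPex (by omega : n < Nat.find hPex)
    omega
  set p := facPos U n with hp
  have hblock : facPos U (n + 1) = p + (U n).length := by simp [facPos, hp]
  -- block starts carry the letter x 0
  have hstart : ∀ j, x (facPos U j) = x 0 := by
    intro j
    have := hcopy j 0 (List.length_pos_iff.mpr (hne j))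
    simpa using this
  -- w fits inside block n
  have hfit : k + m ≤ p + (U n).length := by
    by_contra h
    push_neg at h
    set t := facPos U (n + 1) - k with hT
    have ht1 : 1 ≤ t := by omega
    have ht2 : t < m := by omega
    have h1 := hkb t ht2
    have h2 := hstart (n + 1)
    have : k + t = facPos U (n + 1) := by omega
    rw [this, h2] at h1
    exact hb h1.symm
  -- hence p ≥ 1
  have hp1 : 1 ≤ p := by
    by_contra h
    have hn0 : n = 0 := by
      have := le_facPos hne n; omega
    rw [hn0] at hfit
    omega
  -- w also occurs at k - p < k
  have hocc : FactorAt w x (k - p) := by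
    show w = (List.range w.length).map fun i => x (k - p + i)
    apply List.ext_getElem (by simp)
    intro t ht1 ht2
    simp only [List.getElem_map, List.getElem_range]
    rw [hwget t ht1]
    have htm : t < m := by omega
    have hlt : k - p + t < (U n).length := by omega
    have := hcopy n (k - p + t) hlt
    rw [show p + (k - p + t) = k + t by omega] at this
    rw [← this, hkb t htm]
  exact hmin (k - p) (by omega) hocc
end

section
/- Let s be a non-periodic infinite word such that there exists a non-negative integer t with the property that for each prefixal factorization s = U₁U₂⋯ one has lim inf |Uₙ| ≤ t. Then there exists a finite coloring of the non-empty factors of s with respect to which no factorization of s is monochromatic. -/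
variable {A B : Type}

lemma facPos_const {U : ℕ → List A} {k : ℕ} (h : ∀ n, (U n).length = k) (n : ℕ) :
    facPos U n = n * k := by
  induction n with
  | zero => simp [facPos]
  | succ m ih => simp [facPos, ih, h, Nat.succ_mul]

theorem bounded_liminf_prefixal_factorization_in_P
    (s : ℕ → A) (hnp : ¬ ∃ p > 0, ∀ n, s (n + p) = s n) (t : ℕ)
    (ht : ∀ U : ℕ → List A, IsPrefixalFactorizationOf U s →
      ∃ᶠ n in Filter.atTop, (U n).length ≤ t) :
    ∃ (C : Type) (_ : Fintype C) (c : List A → C),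
      ∀ U : ℕ → List A, IsFactorizationOf U s → ∃ i j, c (U i) ≠ c (U j) := by
  classical
  refine ⟨Fin (t + 2), inferInstance, fun u =>
    if IsPrefixOf u s then ⟨min u.length (t + 1), by omega⟩ else ⟨0, by omega⟩, ?_⟩
  intro U hU
  by_contra hmono
  push_neg at hmono
  set c : List A → Fin (t + 2) := fun u =>
    if IsPrefixOf u s then ⟨min u.length (t + 1), by omega⟩ else ⟨0, by omega⟩ with hc
  -- U 0 is a prefix of s
  have h0 : IsPrefixOf (U 0) s := hU.2 0
  have h0len : 0 < (U 0).length := List.length_pos_iff.mpr (hU.1 0)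
  have hc0 : c (U 0) = ⟨min (U 0).length (t + 1), by omega⟩ := by simp [hc, h0]
  have hc0pos : 0 < (c (U 0)).val := by rw [hc0]; simp; omega
  -- every block is a prefix
  have hpref : ∀ n, IsPrefixOf (U n) s := by
    intro n
    by_contra hn
    have h2 := hmono 0 n
    simp only [h0, hn, if_pos, if_neg, not_false_iff, Fin.mk.injEq] at h2
    omega
  have hpf : IsPrefixalFactorizationOf U s := ⟨hU, hpref⟩
  -- get a block of length ≤ t
  obtain ⟨n, hn⟩ := (ht U hpf).exists
  set k := (U n).length with hk
  have hkt : k ≤ t := hn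
  have hkpos : 0 < k := List.length_pos_iff.mpr (hU.1 n)
  -- all blocks have length k
  have hlen : ∀ m, (U m).length = k := by
    intro m
    have h1 := hmono m n
    simp only [hc, hpref m, hpref n, if_pos, Fin.mk.injEq] at h1
    omega
  -- positions
  have hpos : ∀ m, facPos U m = m * k := facPos_const hlen
  -- periodicity base
  have hper : ∀ m i, i < k → s (m * k + i) = s i := by
    intro m i hi
    have h1 := factorAt_get (hU.2 m) (hi.trans_le (hlen m).ge)
    have h2 := factorAt_get (hpref m) (hi.trans_le (hlen m).ge)
    rw [hpos m] at h1
    rw [← h1, h2]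
    simp
  -- s is k-periodic
  refine hnp ⟨k, hkpos, fun m => ?_⟩
  have hm : s m = s (m % k) := by
    conv_lhs => rw [← Nat.div_add_mod m k, Nat.mul_comm]
    exact hper (m / k) (m % k) (Nat.mod_lt _ hkpos)
  have hmk : s (m + k) = s (m % k) := by
    have : m + k = (m / k + 1) * k + m % k := by
      have := Nat.div_add_mod m k; ring_nf; omega
    rw [this]
    exact hper _ _ (Nat.mod_lt _ hkpos)
  rw [hm, hmk]
end

section
/- Let s be a non-periodic infinite word such that in every prefixal factorization s = U₁U₂⋯ there exist indices i, j for which Uᵢ and Uⱼ terminate with different letters. Then there exists a finite coloring of the non-empty factors of s (with |A|+1 colors) relative to which no factorization of s is monochromatic. -/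
variable {A B : Type}

theorem different_last_letters_in_P
    (s : ℕ → A) (hnp : ¬ ∃ p > 0, ∀ n, s (n + p) = s n)
    (h : ∀ U : ℕ → List A, IsPrefixalFactorizationOf U s →
      ∃ i j, (U i).getLast? ≠ (U j).getLast?) :
    ∃ c : List A → Option A,
      ∀ U : ℕ → List A, IsFactorizationOf U s → ∃ i j, c (U i) ≠ c (U j) := by
  classical
  refine ⟨fun u => if IsPrefixOf u s then u.getLast? else none, fun U hU => ?_⟩
  by_contra hc
  push_neg at hc
  have h0 : IsPrefixOf (U 0) s := hU.2 0
  have h0ne := hU.1 0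
  have h0some : (U 0).getLast? ≠ none := by
    cases hu : U 0 with
    | nil => exact absurd hu h0ne
    | cons a l => simp [hu]
  have hpre : ∀ n, IsPrefixOf (U n) s := by
    intro n
    by_contra hn
    have := hc n 0
    rw [if_neg hn, if_pos h0] at this
    exact h0some this.symm
  obtain ⟨i, j, hij⟩ := h U ⟨hU, hpre⟩
  have := hc i j
  rw [if_pos (hpre i), if_pos (hpre j)] at this
  exact hij this
end

section
/- If an infinite word s has only finitely many distinct square factors, then s is non-periodic and for every prefixal factorization s = U₁U₂⋯ one has |Uᵢ| ≤ n for infinitely many i, where n = max{|v| : vv is a factor of s}. Consequently s admits a finite coloring of its factors with no monochromatic factorization. -/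
variable {A B : Type}

def word (x : ℕ → A) (k l : ℕ) : List A := (List.range l).map fun i => x (k + i)

@[simp] lemma word_length (x : ℕ → A) (k l : ℕ) : (word x k l).length = l := by
  simp [word]

lemma factorAt_word (x : ℕ → A) (k l : ℕ) : FactorAt (word x k l) x k := by
  simp [FactorAt, word]

lemma factorAt_iff_word {u : List A} {x : ℕ → A} {k : ℕ} :
    FactorAt u x k ↔ u = word x k u.length := Iff.rfl

lemma word_eq_word {x y : ℕ → A} {k k' l : ℕ} :
    word x k l = word y k' l ↔ ∀ i < l, x (k + i) = y (k' + i) := by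
  simp [word, List.map_eq_map_iff]

lemma word_append (x : ℕ → A) (k a b : ℕ) :
    word x k (a + b) = word x k a ++ word x (k + a) b := by
  simp [word, List.range_add, Function.comp, add_assoc]

/-- A periodic word has infinitely many distinct squares. -/
lemma periodic_infinite_squares {s : ℕ → A} {p : ℕ} (hp : 0 < p)
    (hper : ∀ n, s (n + p) = s n) :
    {v : List A | v ≠ [] ∧ IsFactorOf (v ++ v) s}.Infinite := by
  have hmul : ∀ m n, s (n + m * p) = s n := by
    intro m
    induction m with
    | zero => simp
    | succ m ih => intro n; rw [Nat.succ_mul, ← add_assoc, hper, ih]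
  apply Set.infinite_of_injective_forall_mem
    (f := fun m : ℕ => word s 0 ((m + 1) * p))
  · intro a b hab
    have := congrArg List.length hab
    simp only [word_length] at this
    exact Nat.succ_injective (Nat.eq_of_mul_eq_mul_right hp this)
  · intro m
    set L := (m + 1) * p with hL
    refine ⟨?_, 0, ?_⟩
    · have : 0 < L := Nat.mul_pos (Nat.succ_pos m) hp
      intro h
      have := congrArg List.length h
      simp only [word_length, List.length_nil] at this
      omega
    · have h1 : word s L L = word s 0 L := by
        rw [word_eq_word]
        intro i hi
        rw [zero_add, add_comm, hmul]
      have h2 : word s 0 L ++ word s 0 L = word s 0 (L + L) := by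
        rw [word_append, zero_add, h1]
      rw [factorAt_iff_word]
      rw [h2, word_length]

/-- no infinite strict descent -/
lemma exists_le_succ (f : ℕ → ℕ) (N : ℕ) : ∃ j, N ≤ j ∧ f j ≤ f (j + 1) := by
  by_contra h
  push_neg at h
  have key : ∀ m, f (N + m) + m ≤ f N := by
    intro m
    induction m with
    | zero => simp
    | succ m ih =>
      have := h (N + m) (Nat.le_add_right _ _)
      have : f (N + (m + 1)) < f (N + m) := by rw [← add_assoc]; omega
      omega
  have := key (f N + 1)
  omega

/-- two consecutive prefix blocks with nondecreasing lengths give a square -/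
lemma square_of_blocks {s : ℕ → A} {U : ℕ → List A}
    (hU : IsPrefixalFactorizationOf U s) {j : ℕ}
    (hj : (U j).length ≤ (U (j + 1)).length) :
    U j ≠ [] ∧ IsFactorOf (U j ++ U j) s := by
  obtain ⟨⟨hne, hfac⟩, hpre⟩ := hU
  set p := facPos U j with hp
  set L := (U j).length with hLdef
  have e1 : U j = word s p L := hfac j
  have e2 : U j = word s 0 L := hpre j
  have e3 : U (j + 1) = word s (p + L) (U (j+1)).length := hfac (j + 1)
  have e4 : U (j + 1) = word s 0 (U (j+1)).length := hpre (j + 1)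
  have key : word s (p + L) L = word s 0 L := by
    rw [word_eq_word]
    intro i hi
    have := (word_eq_word.mp (e4.symm.trans e3)) i (lt_of_lt_of_le hi hj)
    exact this.symm
  refine ⟨hne j, p, ?_⟩
  have h2 : U j ++ U j = word s p (L + L) := by
    rw [word_append, ← e1, key, ← e2]
  have hl : (U j ++ U j).length = L + L := by simp [← hLdef]
  rw [factorAt_iff_word, hl]
  exact h2

/-- if all blocks of a factorization equal the same nonempty word, the word is periodic -/
lemma periodic_of_const_blocks {s : ℕ → A} {U : ℕ → List A}
    (hU : IsFactorizationOf U s) {v : List A} (hv : ∀ i, U i = v) (hvp : IsPrefixOf v s) :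
    ∀ m, s (m + v.length) = s m := by
  obtain ⟨hne, hfac⟩ := hU
  set p := v.length with hpdef
  have hp : 0 < p := List.length_pos_iff.mpr (hv 0 ▸ hne 0)
  have hpos : ∀ j, facPos U j = j * p := by
    intro j
    induction j with
    | zero => simp [facPos]
    | succ j ih => show facPos U j + (U j).length = _; rw [ih, hv j, ← hpdef]; ring
  have hword : ∀ j, ∀ r < p, s (j * p + r) = s r := by
    intro j r hr
    have h1 : v = word s (j * p) p := by
      have := hfac j; rw [hv j, hpos j] at this; exact this
    have h2 : v = word s 0 p := hvp
    have := word_eq_word.mp (h1.symm.trans h2) r hr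
    simpa using this
  intro m
  obtain ⟨q, r, hr, rfl⟩ : ∃ q r, r < p ∧ m = q * p + r :=
    ⟨m / p, m % p, Nat.mod_lt _ hp, (Nat.div_add_mod' m p).symm⟩
  have h1 : s (q * p + r) = s r := hword q r hr
  have h2 : s ((q + 1) * p + r) = s r := hword (q + 1) r hr
  have h3 : q * p + r + p = (q + 1) * p + r := by ring
  rw [h3, h2, h1]

theorem finitely_many_squares_in_P
    (s : ℕ → A)
    (hfin : {v : List A | v ≠ [] ∧ IsFactorOf (v ++ v) s}.Finite) :
    (¬ ∃ p > 0, ∀ n, s (n + p) = s n) ∧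
    (∀ n : ℕ,
      IsGreatest (List.length '' {v : List A | v ≠ [] ∧ IsFactorOf (v ++ v) s}) n →
      ∀ U : ℕ → List A, IsPrefixalFactorizationOf U s →
        {i | (U i).length ≤ n}.Infinite) ∧
    ∃ (C : Type) (_ : Fintype C) (c : List A → C),
      ∀ U : ℕ → List A, IsFactorizationOf U s → ∃ i j, c (U i) ≠ c (U j) := by
  have hnonper : ¬ ∃ p > 0, ∀ n, s (n + p) = s n := by
    rintro ⟨p, hp, hper⟩
    exact (periodic_infinite_squares hp hper) hfin
  have hpart2 : ∀ n : ℕ,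
      IsGreatest (List.length '' {v : List A | v ≠ [] ∧ IsFactorOf (v ++ v) s}) n →
      ∀ U : ℕ → List A, IsPrefixalFactorizationOf U s →
        {i | (U i).length ≤ n}.Infinite := by
    intro n hn U hU
    by_contra hinf
    rw [Set.not_infinite] at hinf
    obtain ⟨b, hb⟩ := hinf.bddAbove
    have hbig : ∀ i, b + 1 ≤ i → n < (U i).length := by
      intro i hi
      by_contra hle
      push_neg at hle
      have := hb (show i ∈ {i | (U i).length ≤ n} from hle)
      omega
    obtain ⟨j, hjN, hjle⟩ := exists_le_succ (fun i => (U i).length) (b + 1)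
    have hsq := square_of_blocks hU hjle
    have h1 : (U j).length ≤ n := hn.2 ⟨U j, hsq, rfl⟩
    have h2 := hbig j hjN
    omega
  refine ⟨hnonper, hpart2, ?_⟩
  classical
  set S := {v : List A | v ≠ [] ∧ IsFactorOf (v ++ v) s} with hSdef
  set N := hfin.toFinset.sup List.length + 1 with hNdef
  have hvN : ∀ v ∈ S, v.length < N := by
    intro v hv
    have : v.length ≤ hfin.toFinset.sup List.length :=
      Finset.le_sup (hfin.mem_toFinset.mpr hv)
    omega
  refine ⟨Bool × Fin (N + 1), inferInstance, fun u =>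
    (decide (IsPrefixOf u s), ⟨min u.length N, Nat.lt_succ_of_le (min_le_right _ _)⟩), ?_⟩
  intro U hU
  by_contra hmono
  push_neg at hmono
  have hpref0 : IsPrefixOf (U 0) s := hU.2 0
  have hpref : ∀ i, IsPrefixOf (U i) s := by
    intro i
    have h := congrArg Prod.fst (hmono i 0)
    simp only [decide_eq_decide] at h
    exact h.mpr hpref0
  have hUP : IsPrefixalFactorizationOf U s := ⟨hU, hpref⟩
  have hmin : ∀ i, min (U i).length N = min (U 0).length N := by
    intro i
    have h := congrArg (fun z : Bool × Fin (N+1) => (z.2 : Fin (N+1)).val) (hmono i 0)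
    simpa using h
  by_cases hcase : N ≤ (U 0).length
  · have hgen : ∀ i, N ≤ (U i).length := by
      intro i
      have h := hmin i
      rw [min_eq_right hcase] at h
      calc N = min (U i).length N := h.symm
        _ ≤ (U i).length := min_le_left _ _
    obtain ⟨j, _, hjle⟩ := exists_le_succ (fun i => (U i).length) 0
    have hsq := square_of_blocks hUP hjle
    have h1 := hvN _ hsq
    have h2 := hgen j
    omega
  · push_neg at hcase
    have hlen : ∀ i, (U i).length = (U 0).length := by
      intro i
      have h := hmin i
      rw [min_eq_left hcase.le] at h
      rcases le_or_gt (U i).length N with h' | h'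
      · rw [min_eq_left h'] at h; exact h
      · rw [min_eq_right h'.le] at h; omega
    have hconst : ∀ i, U i = U 0 := by
      intro i
      have e1 : U i = word s 0 (U i).length := hpref i
      have e2 : U 0 = word s 0 (U 0).length := hpref 0
      rw [e1, e2, hlen i]
    have hper := periodic_of_const_blocks hU hconst hpref0
    have hp : 0 < (U 0).length := List.length_pos_iff.mpr (hU.1 0)
    exact hnonper ⟨(U 0).length, hp, hper⟩
end

section
/- If s ∈ A^ω is not recurrent, then every prefixal factorization s = U₁U₂⋯ of s satisfies |Uᵢ| < |p| for all but finitely many i, where p is the shortest non-recurrent prefix of s. -/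
variable {A B : Type}

theorem non_recurrent_prefixal_factorization_eventually_short
    (s : ℕ → A) (p : List A) (hp : IsPrefixOf p s)
    (hnr : {k | FactorAt p s k}.Finite)
    (hmin : ∀ q : List A, IsPrefixOf q s → q.length < p.length →
      {k | FactorAt q s k}.Infinite) :
    ∀ U : ℕ → List A, IsPrefixalFactorizationOf U s →
      {i | ¬ (U i).length < p.length}.Finite := by
  rintro U ⟨⟨hne, hfac⟩, hpre⟩
  have hmono : StrictMono (facPos U) := strictMono_nat_of_lt_succ fun n => by
    have := List.length_pos_iff.mpr (hne n)
    simp [facPos]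
    omega
  apply Set.Finite.of_finite_image (f := facPos U)
    (hnr.subset ?_) (hmono.injective.injOn)
  rintro k ⟨i, hi, rfl⟩
  simp only [Set.mem_setOf_eq, not_lt] at hi
  have key : ∀ j, ∀ hj : j < (U i).length, s (facPos U i + j) = s j := by
    intro j hj
    have a1 := List.getElem_of_eq (hfac i) hj
    have a2 := List.getElem_of_eq (hpre i) hj
    simp only [List.getElem_map, List.getElem_range, Nat.zero_add] at a1 a2
    rw [← a1, a2]
  show FactorAt p s (facPos U i)
  unfold FactorAt
  apply List.ext_getElem (by simp)
  intro j hj1 hj2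
  simp only [List.getElem_map, List.getElem_range]
  rw [key j (lt_of_lt_of_le hj1 hi)]
  have := List.getElem_of_eq hp hj1
  simpa using this
end

section
/- Let u be a uniformly recurrent non-empty prefix of an infinite word t. Then t admits a finite coloring of its non-empty factors with no monochromatic factorization if and only if the derived word 𝒟_u(t) does. -/
variable {A B : Type}

/-- `v` is a return word to `u` in `t`: `v ++ u` is a factor of `t` beginning and
ending with `u` and containing exactly two occurrences of `u`. -/
def IsReturnWord (u : List A) (t : ℕ → A) (v : List A) : Prop :=
  v ≠ [] ∧ IsFactorOf (v ++ u) t ∧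
    {i | u <+: (v ++ u).drop i} = {0, v.length}

/-! ### Auxiliary material -/

/-- segment of an infinite word -/
def seg {α : Type} (x : ℕ → α) (k n : ℕ) : List α := (List.range n).map fun i => x (k + i)

@[simp] lemma seg_length {α : Type} (x : ℕ → α) (k n : ℕ) : (seg x k n).length = n := by
  simp [seg]

@[simp] lemma seg_zero {α : Type} (x : ℕ → α) (k : ℕ) : seg x k 0 = [] := rfl

lemma seg_one {α : Type} (x : ℕ → α) (k : ℕ) : seg x k 1 = [x k] := by
  show List.map (fun i => x (k + i)) (List.range 1) = [x k]
  rw [show List.range 1 = [0] from rfl]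
  simp

lemma seg_add {α : Type} (x : ℕ → α) (k m n : ℕ) :
    seg x k (m + n) = seg x k m ++ seg x (k + m) n := by
  unfold seg
  rw [List.range_add, List.map_append, List.map_map]
  congr 1
  apply List.map_congr_left
  intro a _
  simp [Nat.add_assoc]

lemma factorAt_iff_s14 {w : List A} {x : ℕ → A} {k : ℕ} :
    FactorAt w x k ↔ w = seg x k w.length := Iff.rfl

lemma factorAt_seg (x : ℕ → A) (k n : ℕ) : FactorAt (seg x k n) x k := by
  rw [factorAt_iff_s14, seg_length]

lemma seg_take {α : Type} (x : ℕ → α) (k : ℕ) {m n : ℕ} (h : m ≤ n) :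
    (seg x k n).take m = seg x k m := by
  have h2 : n = m + (n - m) := by omega
  rw [h2, seg_add, List.take_left' (seg_length x k m)]

lemma seg_drop {α : Type} (x : ℕ → α) (k : ℕ) {m n : ℕ} (h : m ≤ n) :
    (seg x k n).drop m = seg x (k + m) (n - m) := by
  have h2 : n = m + (n - m) := by omega
  rw [h2, seg_add, List.drop_left' (seg_length x k m)]
  congr 1
  omega

lemma prefix_seg {α : Type} {x : ℕ → α} {k n : ℕ} {w : List α} (h : w <+: seg x k n) :
    w = seg x k w.length := by
  have hl : w.length ≤ n := by simpa using h.length_le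
  have h2 := List.prefix_iff_eq_take.1 h
  rw [seg_take x k hl] at h2
  exact h2

lemma seg_prefix {α : Type} (x : ℕ → α) (k : ℕ) {m n : ℕ} (h : m ≤ n) :
    seg x k m <+: seg x k n :=
  ⟨seg x (k + m) (n - m), by rw [← seg_add]; congr 1; omega⟩

lemma seg_eq_iff {α : Type} (x : ℕ → α) (a b n : ℕ) :
    seg x a n = seg x b n ↔ ∀ r < n, x (a + r) = x (b + r) := by
  constructor
  · intro h r hr
    have h1 : (seg x a n)[r]'(by simp [hr]) = x (a + r) := by simp [seg]
    have h2 : (seg x b n)[r]'(by simp [hr]) = x (b + r) := by simp [seg]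
    rw [← h1, ← h2]
    congr 1
  · intro h
    unfold seg
    apply List.map_congr_left
    intro i hi
    exact h i (List.mem_range.1 hi)

/-- cut a word along a list of positions (the last slice extends to the end). -/
def chop {α : Type} (w : List α) : List ℕ → List (List α)
  | [] => []
  | [i] => [w.drop i]
  | i :: j :: rest => ((w.drop i).take (j - i)) :: chop w (j :: rest)


open Classical in
noncomputable def cutsW (u w : List A) : List ℕ :=
  (List.range w.length).filter fun i => decide (u <+: (w.drop i ++ u))

open Classical in
noncomputable def psiW (u : List A) (t : ℕ → A) (r0 : {v : List A // IsReturnWord u t v})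
    (w : List A) : List {v : List A // IsReturnWord u t v} :=
  (chop w (cutsW u w)).map fun v => if h : IsReturnWord u t v then ⟨v, h⟩ else r0

lemma map_range_succ {β : Type} (f : ℕ → β) (n : ℕ) :
    (List.range (n + 1)).map f = f 0 :: (List.range n).map fun j => f (j + 1) := by
  rw [List.range_succ_eq_map, List.map_cons, List.map_map]
  rfl

lemma chop_eq {α : Type} (w : List α) :
    ∀ (m : ℕ) (g : ℕ → ℕ) (X : ℕ → List α),
      (0 < m → w.drop (g (m - 1)) = X (m - 1)) →
      (∀ j, j + 1 < m → (w.drop (g j)).take (g (j + 1) - g j) = X j) →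
      chop w ((List.range m).map g) = (List.range m).map X := by
  intro m
  induction m with
  | zero => intro g X _ _; rfl
  | succ n IH =>
    intro g X hlast hmid
    rcases n with _ | n'
    · rw [map_range_succ g 0, map_range_succ X 0]
      simp only [List.range_zero, List.map_nil]
      show chop w [g 0] = [X 0]
      rw [show chop w [g 0] = [w.drop (g 0)] from rfl]
      rw [hlast (by omega)]
    · rw [map_range_succ g (n' + 1), map_range_succ (fun j => g (j + 1)) n',
        map_range_succ X (n' + 1)]
      show chop w (g 0 :: g (0 + 1) :: _) = X 0 :: _
      rw [show chop w (g 0 :: g (0 + 1) :: ((List.range n').map fun j => g (j + 1 + 1)))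
          = ((w.drop (g 0)).take (g (0 + 1) - g 0)) ::
            chop w (g (0 + 1) :: ((List.range n').map fun j => g (j + 1 + 1))) from rfl]
      congr 1
      · exact hmid 0 (by omega)
      · rw [← map_range_succ (fun j => g (j + 1)) n']
        rw [IH (fun j => g (j + 1)) (fun j => X (j + 1))
          (fun _ => hlast (by omega)) (fun j hj => hmid (j + 1) (by omega))]

theorem inP_iff_derived_inP
    (t : ℕ → A) (u : List A) (hu : u ≠ []) (hpre : IsPrefixOf u t)
    (hur : ∃ K : ℕ, ∀ m : ℕ, ∃ k, m ≤ k ∧ k < m + K ∧ FactorAt u t k)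
    (V : ℕ → List A) (hV : IsFactorizationOf V t)
    (hret : ∀ n, IsReturnWord u t (V n)) :
    InP t ↔ InP (fun n => (⟨V n, hret n⟩ : {v : List A // IsReturnWord u t v})) := by
  classical
  set d : ℕ → {v : List A // IsReturnWord u t v} := fun n => ⟨V n, hret n⟩ with hd
  set p : ℕ → ℕ := facPos V with hp
  have hp0 : p 0 = 0 := rfl
  have hpsucc : ∀ n, p (n + 1) = p n + (V n).length := fun n => rfl
  have hVn : ∀ n, V n = seg t (p n) (V n).length := fun n => hV.2 n
  have hVpos : ∀ n, 0 < (V n).length := fun n => List.length_pos_iff.2 (hV.1 n)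
  have pmono : StrictMono p := strictMono_nat_of_lt_succ (fun n => by
    rw [hpsucc]; have := hVpos n; omega)
  -- every block position is an occurrence of u
  have occ_fwd : ∀ n, u = seg t (p n) u.length := by
    have h0ret : ∀ n, u <+: V n ++ u := by
      intro n
      have h0 : (0 : ℕ) ∈ {i | u <+: (V n ++ u).drop i} := by
        rw [(hret n).2.2]; exact Set.mem_insert 0 _
      simpa using h0
    have aux : ∀ l, ∀ w : List A, w.length ≤ l → w <+: u → ∀ n, w = seg t (p n) w.length := by
      intro l
      induction l with
      | zero =>
        intro w hw _ n
        have hnil : w = [] := List.length_eq_zero_iff.1 (Nat.le_zero.1 hw)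
        subst hnil; simp
      | succ l IH =>
        intro w hwl hwu n
        have hwvu : w <+: V n ++ u := hwu.trans (h0ret n)
        by_cases hc : w.length ≤ (V n).length
        · have h1 : w <+: V n :=
            List.prefix_of_prefix_length_le hwvu (List.prefix_append _ _) hc
          have h2 : w <+: seg t (p n) (V n).length := (hVn n) ▸ h1
          exact prefix_seg h2
        · push_neg at hc
          have hvw : V n <+: w :=
            List.prefix_of_prefix_length_le (List.prefix_append _ _) hwvu (le_of_lt hc)
          obtain ⟨w', rfl⟩ := hvw
          have hw'u : w' <+: u := (List.prefix_append_right_inj (V n)).1 hwvu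
          have hw'l : w'.length ≤ l := by
            rw [List.length_append] at hwl
            have := hVpos n; omega
          have hIH := IH w' hw'l hw'u (n + 1)
          rw [List.length_append, seg_add, ← hVn n, ← hpsucc n, ← hIH]
    intro n
    exact aux u.length u le_rfl (List.prefix_refl u) n
  -- every occurrence of u is a block position
  have occ_bwd : ∀ k, u = seg t k u.length → ∃ n, k = p n := by
    intro k hk
    have h0 : p 0 ≤ k := by rw [hp0]; exact Nat.zero_le k
    obtain ⟨n, hPn, hlt⟩ : ∃ n, p n ≤ k ∧ k < p (n + 1) := by
      refine ⟨Nat.findGreatest (fun m => p m ≤ k) k,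
        Nat.findGreatest_spec (P := fun m => p m ≤ k) (n := k) (m := 0) (Nat.zero_le k) h0, ?_⟩
      by_cases h : Nat.findGreatest (fun m => p m ≤ k) k + 1 ≤ k
      · by_contra hh
        push_neg at hh
        exact Nat.findGreatest_is_greatest (Nat.lt_succ_self _) h hh
      · push_neg at h
        exact lt_of_lt_of_le h pmono.le_apply
    refine ⟨n, ?_⟩
    set i := k - p n with hi
    have hik : k = p n + i := by omega
    have hilt : i < (V n).length := by have := hpsucc n; omega
    have happ : V n ++ u = seg t (p n) ((V n).length + u.length) := by
      rw [seg_add, ← hVn n, ← hpsucc n, ← occ_fwd (n + 1)]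
    have hpref : u <+: (V n ++ u).drop i := by
      rw [happ, seg_drop t (p n) (by omega)]
      have hsp := seg_prefix t (p n + i)
        (show u.length ≤ (V n).length + u.length - i by omega)
      rw [← hik] at hsp
      rw [← hk] at hsp
      rw [hik] at hsp
      exact hsp
    have hmem : i = 0 ∨ i = (V n).length := by
      have h2 : i ∈ {j | u <+: (V n ++ u).drop j} := hpref
      rw [(hret n).2.2] at h2
      simpa using h2
    omega
  constructor
  · -- InP t → InP derived
    rintro ⟨C, iC, c, hc⟩
    refine ⟨C, iC, fun l => c ((l.map Subtype.val).flatten), ?_⟩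
    intro W hW
    have hjoin : ∀ a cnt,
        ((seg d a cnt).map Subtype.val).flatten = seg t (p a) (p (a + cnt) - p a) := by
      intro a cnt
      induction cnt with
      | zero => simp
      | succ cnt IH =>
        rw [show a + (cnt + 1) = (a + cnt) + 1 from rfl]
        rw [seg_add, List.map_append, List.flatten_append, IH, seg_one]
        have hval : ((([d (a + cnt)] : List _).map Subtype.val)).flatten = V (a + cnt) := by
          simp [hd]
        rw [hval, hVn (a + cnt)]
        have h1 : p a ≤ p (a + cnt) := pmono.monotone (by omega)
        have h2 : p (a + cnt) - p a + (V (a + cnt)).length = p (a + cnt + 1) - p a := by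
          have := hpsucc (a + cnt); omega
        rw [← h2, seg_add, show p a + (p (a + cnt) - p a) = p (a + cnt) from by omega]
    set fp : ℕ → ℕ := facPos W with hfp
    have hfpsucc : ∀ n, fp (n + 1) = fp n + (W n).length := fun n => rfl
    have hfpmono : ∀ n, fp n < fp (n + 1) := fun n => by
      rw [hfpsucc]
      have := List.length_pos_iff.2 (hW.1 n); omega
    set U : ℕ → List A := fun n => ((W n).map Subtype.val).flatten with hU
    have hUn : ∀ n, U n = seg t (p (fp n)) (p (fp (n + 1)) - p (fp n)) := by
      intro n
      have h1 : W n = seg d (fp n) (W n).length := hW.2 n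
      calc U n = ((W n).map Subtype.val).flatten := rfl
        _ = ((seg d (fp n) (W n).length).map Subtype.val).flatten := by rw [← h1]
        _ = seg t (p (fp n)) (p (fp n + (W n).length) - p (fp n)) := hjoin _ _
        _ = seg t (p (fp n)) (p (fp (n + 1)) - p (fp n)) := by rw [← hfpsucc n]
    have hUlen : ∀ n, (U n).length = p (fp (n + 1)) - p (fp n) := by
      intro n; rw [hUn n, seg_length]
    have hfpU : ∀ n, facPos U n = p (fp n) := by
      intro n
      induction n with
      | zero =>
        show (0 : ℕ) = p (fp 0)
        rw [show fp 0 = 0 from rfl, hp0]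
      | succ n IH =>
        have h1 : facPos U (n + 1) = facPos U n + (U n).length := rfl
        rw [h1, IH, hUlen n]
        have h2 : p (fp n) ≤ p (fp (n + 1)) := pmono.monotone (le_of_lt (hfpmono n))
        omega
    have hUfac : IsFactorizationOf U t := by
      constructor
      · intro n
        have h2 : 0 < (U n).length := by
          rw [hUlen n]
          have := pmono (hfpmono n); omega
        exact List.ne_nil_of_length_pos h2
      · intro n
        rw [factorAt_iff_s14, hfpU n, hUlen n]
        exact hUn n
    obtain ⟨i, j, hij⟩ := hc U hUfac
    exact ⟨i, j, hij⟩
  · -- InP derived → InP t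
    rintro ⟨C', iC', c', hc'⟩
    haveI := iC'
    set r0 : {v : List A // IsReturnWord u t v} := ⟨V 0, hret 0⟩ with hr0
    refine ⟨Bool × Fin (u.length + 1) × C', inferInstance,
      fun w => (decide (IsPrefixOf w t), ⟨min w.length u.length, by omega⟩,
        c' (psiW u t r0 w)), ?_⟩
    intro U hU
    by_contra hcon
    push_neg at hcon
    have hpf : ∀ n, IsPrefixOf (U n) t := by
      intro n
      have h0 : IsPrefixOf (U 0) t := hU.2 0
      have h := hcon n 0
      simp only [Prod.mk.injEq] at h
      have h1 := h.1
      rw [decide_eq_true h0] at h1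
      exact of_decide_eq_true h1
    have hlen : ∀ n, min (U n).length u.length = min (U 0).length u.length := by
      intro n
      have h := hcon n 0
      simp only [Prod.mk.injEq, Fin.mk.injEq] at h
      exact h.2.1
    have hchi : ∀ i j, c' (psiW u t r0 (U i)) = c' (psiW u t r0 (U j)) := by
      intro i j
      have h := hcon i j
      simp only [Prod.mk.injEq, Fin.mk.injEq] at h
      exact h.2.2
    have hUseg : ∀ n, U n = seg t 0 (U n).length := fun n => factorAt_iff_s14.1 (hpf n)
    have hUpos : ∀ n, 0 < (U n).length := fun n => List.length_pos_iff.2 (hU.1 n)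
    have hqsucc : ∀ n, facPos U (n + 1) = facPos U n + (U n).length := fun n => rfl
    by_cases hbig : ∀ n, u.length ≤ (U n).length
    · -- aligned case: all blocks begin with u, boundaries are occurrences
      have hqocc : ∀ n, u = seg t (facPos U n) u.length := by
        intro n
        have h1 : U n = seg t (facPos U n) (U n).length := hU.2 n
        have h2 : seg t 0 u.length <+: seg t 0 (U n).length := seg_prefix t 0 (hbig n)
        rw [← hUseg n] at h2
        have hp' : u = seg t 0 u.length := hpre
        rw [← hp'] at h2
        rw [h1] at h2
        exact prefix_seg h2
      choose σ hσ using fun n => occ_bwd (facPos U n) (hqocc n)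
      have hσlt : ∀ n, σ n < σ (n + 1) := by
        intro n
        apply pmono.lt_iff_lt.1
        rw [← hσ n, ← hσ (n + 1), hqsucc n]
        have := hUpos n; omega
      have hσ0 : σ 0 = 0 := by
        apply pmono.injective
        rw [← hσ 0, hp0]
        rfl
      -- the key decoding lemma
      have hPSI : ∀ a b, a < b →
          psiW u t r0 (seg t (p a) (p b - p a)) = seg d a (b - a) := by
        intro a b hab
        set w : List A := seg t (p a) (p b - p a) with hwdef
        have hw_len : w.length = p b - p a := by rw [hwdef, seg_length]
        have hpab : p a < p b := pmono hab
        have hmem : ∀ i, i ∈ cutsW u w ↔ ∃ j < b - a, i = p (a + j) - p a := by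
          intro i
          unfold cutsW
          rw [List.mem_filter, List.mem_range, hw_len, decide_eq_true_eq]
          constructor
          · rintro ⟨hilt, hipre⟩
            have hdrop : w.drop i = seg t (p a + i) (p b - p a - i) := by
              rw [hwdef]; exact seg_drop t (p a) (le_of_lt hilt)
            have happ : w.drop i ++ u = seg t (p a + i) ((p b - p a - i) + u.length) := by
              rw [hdrop, seg_add,
                show p a + i + (p b - p a - i) = p b from by omega, ← occ_fwd b]
            have hu2 : u = seg t (p a + i) u.length := by
              apply prefix_seg (x := t) (k := p a + i) (n := (p b - p a - i) + u.length)
              rw [← happ]; exact hipre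
            obtain ⟨m, hm⟩ := occ_bwd _ hu2
            have ham : a ≤ m := pmono.le_iff_le.1 (by omega)
            have hbm : m < b := pmono.lt_iff_lt.1 (by omega)
            exact ⟨m - a, by omega, by rw [show a + (m - a) = m from by omega]; omega⟩
          · rintro ⟨j, hj, rfl⟩
            have hm : a + j < b := by omega
            have h1 : p a ≤ p (a + j) := pmono.monotone (by omega)
            have h2 : p (a + j) < p b := pmono hm
            refine ⟨by omega, ?_⟩
            have hdrop : w.drop (p (a + j) - p a) = seg t (p (a + j)) (p b - p (a + j)) := by
              rw [hwdef, seg_drop t (p a) (by omega)]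
              congr 1 <;> omega
            rw [hdrop]
            have happ : seg t (p (a + j)) (p b - p (a + j)) ++ u
                = seg t (p (a + j)) ((p b - p (a + j)) + u.length) := by
              rw [seg_add, show p (a + j) + (p b - p (a + j)) = p b from by omega,
                ← occ_fwd b]
            rw [happ]
            have h3 := seg_prefix t (p (a + j))
              (show u.length ≤ (p b - p (a + j)) + u.length by omega)
            rw [← occ_fwd (a + j)] at h3
            exact h3
        have hcuts : cutsW u w = (List.range (b - a)).map fun j => p (a + j) - p a := by
          haveI : IsAntisymm ℕ (· < ·) := ⟨fun x y h1 h2 => absurd h1 (Nat.lt_asymm h2)⟩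
          have hsorted2 : List.Pairwise (· < ·)
              ((List.range (b - a)).map fun j => p (a + j) - p a) := by
            refine List.Pairwise.map _ (fun x y (hxy : x < y) => ?_)
              List.pairwise_lt_range
            have h1 : p a ≤ p (a + x) := pmono.monotone (by omega)
            have h2 := pmono (show a + x < a + y by omega)
            omega
          have hsorted1 : List.Pairwise (· < ·) (cutsW u w) := by
            unfold cutsW
            exact List.pairwise_lt_range.filter _
          have hnd1 : (cutsW u w).Nodup := hsorted1.imp (fun h => Nat.ne_of_lt h)
          have hnd2 : ((List.range (b - a)).map fun j => p (a + j) - p a).Nodup :=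
            hsorted2.imp (fun h => Nat.ne_of_lt h)
          refine List.Perm.eq_of_pairwise (fun _ _ _ _ h1 h2 => absurd h1 (Nat.lt_asymm h2))
            hsorted1 hsorted2 ((List.perm_ext_iff_of_nodup hnd1 hnd2).2 ?_)
          intro x
          rw [hmem x]
          simp only [List.mem_map, List.mem_range]
          constructor
          · rintro ⟨j, hj, rfl⟩; exact ⟨j, hj, rfl⟩
          · rintro ⟨j, hj, rfl⟩; exact ⟨j, hj, rfl⟩
        have hlast : 0 < b - a →
            w.drop ((fun j => p (a + j) - p a) (b - a - 1)) = (fun j => V (a + j)) (b - a - 1) := by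
          intro _
          simp only
          have hb1 : a + (b - a - 1) = b - 1 := by omega
          rw [hb1]
          have h1 : p a ≤ p (b - 1) := pmono.monotone (by omega)
          have h2 : p (b - 1) ≤ p b := pmono.monotone (by omega)
          have hpb := hpsucc (b - 1)
          rw [show b - 1 + 1 = b from by omega] at hpb
          rw [hwdef, seg_drop t (p a) (by omega)]
          rw [show p a + (p (b - 1) - p a) = p (b - 1) from by omega,
            show p b - p a - (p (b - 1) - p a) = (V (b - 1)).length from by omega]
          exact (hVn (b - 1)).symm
        have hmid : ∀ j, j + 1 < b - a →
            ((w.drop ((fun j => p (a + j) - p a) j)).take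
              ((fun j => p (a + j) - p a) (j + 1) - (fun j => p (a + j) - p a) j))
            = (fun j => V (a + j)) j := by
          intro j hj
          simp only
          have h1 : p a ≤ p (a + j) := pmono.monotone (by omega)
          have h2 : p (a + j) ≤ p (a + (j + 1)) := pmono.monotone (by omega)
          have h3 : p (a + (j + 1)) ≤ p b := pmono.monotone (by omega)
          have hps := hpsucc (a + j)
          have hps' : p (a + (j + 1)) = p (a + j) + (V (a + j)).length := by
            rw [show a + (j + 1) = (a + j) + 1 from by omega]; exact hps
          rw [hwdef, seg_drop t (p a) (by omega)]
          rw [show p a + (p (a + j) - p a) = p (a + j) from by omega]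
          rw [seg_take t (p (a + j))
            (show p (a + (j + 1)) - p a - (p (a + j) - p a) ≤ p b - p a - (p (a + j) - p a)
              from by omega)]
          rw [show p (a + (j + 1)) - p a - (p (a + j) - p a) = (V (a + j)).length
            from by omega]
          exact (hVn (a + j)).symm
        unfold psiW
        rw [hcuts, chop_eq w (b - a) (fun j => p (a + j) - p a) (fun j => V (a + j))
          hlast hmid]
        rw [List.map_map]
        unfold seg
        apply List.map_congr_left
        intro j hj
        show (if h : IsReturnWord u t (V (a + j)) then
            (⟨V (a + j), h⟩ : {v : List A // IsReturnWord u t v}) else r0) = d (a + j)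
        rw [dif_pos (hret (a + j))]
      set W : ℕ → List {v : List A // IsReturnWord u t v} :=
        fun n => seg d (σ n) (σ (n + 1) - σ n) with hWdef
      have hWlen : ∀ n, (W n).length = σ (n + 1) - σ n := by
        intro n; rw [hWdef]; exact seg_length _ _ _
      have hfpW : ∀ n, facPos W n = σ n := by
        intro n
        induction n with
        | zero => rw [hσ0]; rfl
        | succ n IH =>
          have h1 : facPos W (n + 1) = facPos W n + (W n).length := rfl
          rw [h1, IH, hWlen n]
          have := hσlt n; omega
      have hWfac : IsFactorizationOf W d := by
        constructor
        · intro n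
          apply List.ne_nil_of_length_pos
          rw [hWlen n]
          have := hσlt n; omega
        · intro n
          rw [factorAt_iff_s14, hfpW n, hWlen n]
      obtain ⟨i, j, hij⟩ := hc' W hWfac
      apply hij
      have h := hchi i j
      have hUn' : ∀ n, U n = seg t (p (σ n)) (p (σ (n + 1)) - p (σ n)) := by
        intro n
        have h1 : (U n).length = p (σ (n + 1)) - p (σ n) := by
          have h2 := hqsucc n
          rw [hσ n, hσ (n + 1)] at h2
          omega
        rw [← h1, ← hσ n]
        exact hU.2 n
      rw [hUn' i, hUn' j, hPSI _ _ (hσlt i), hPSI _ _ (hσlt j)] at h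
      exact h
    · -- short case: t is periodic, hence d is periodic
      push_neg at hbig
      obtain ⟨n₀, hn₀⟩ := hbig
      have hall : ∀ n, (U n).length = (U n₀).length := by
        intro n
        have h1 := (hlen n).trans (hlen n₀).symm
        omega
      set μ := (U n₀).length with hμ
      have hμpos : 0 < μ := hUpos n₀
      have hblocks : ∀ n, seg t (n * μ) μ = seg t 0 μ := by
        intro n
        have hfpn : facPos U n = n * μ := by
          induction n with
          | zero => show facPos U 0 = 0 * μ; rw [Nat.zero_mul]; rfl
          | succ n IH =>
            rw [hqsucc n, IH, hall n]
            ring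
        have h1 : U n = seg t (n * μ) (U n).length := by
          rw [← hfpn]; exact hU.2 n
        rw [hall n] at h1
        have h2 : U n = seg t 0 μ := by
          have h3 := hUseg n
          rw [hall n] at h3
          exact h3
        rw [← h1, h2]
      have per : ∀ i, t (i + μ) = t i := by
        intro i
        have hdm := Nat.div_add_mod i μ
        set n := i / μ with hn
        set r := i % μ with hr
        have hrlt : r < μ := Nat.mod_lt _ hμpos
        have hdm' : n * μ + r = i := by rw [Nat.mul_comm]; exact hdm
        have hseg : seg t (n * μ) μ = seg t ((n + 1) * μ) μ :=
          (hblocks n).trans (hblocks (n + 1)).symm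
        have hkey := (seg_eq_iff t (n * μ) ((n + 1) * μ) μ).1 hseg r hrlt
        calc t (i + μ) = t ((n + 1) * μ + r) := by
              rw [show (n + 1) * μ + r = i + μ from by rw [Nat.succ_mul]; omega]
          _ = t (n * μ + r) := hkey.symm
          _ = t i := by rw [hdm']
      have perS : ∀ k m, seg t (k + μ) m = seg t k m := by
        intro k m
        rw [seg_eq_iff]
        intro r hr
        rw [show k + μ + r = (k + r) + μ from by omega, per]
      have hocc_mu : u = seg t μ u.length := by
        have h1 : u = seg t 0 u.length := hpre
        have h2 := perS 0 u.length
        rw [Nat.zero_add] at h2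
        exact h1.trans h2.symm
      obtain ⟨e, he⟩ := occ_bwd μ hocc_mu
      have hepos : 0 < e := by
        rcases Nat.eq_zero_or_pos e with h | h
        · rw [h, hp0] at he; omega
        · exact h
      have hshift : ∀ m, p (m + e) = p m + μ := by
        intro m
        induction m with
        | zero =>
          rw [Nat.zero_add, hp0, Nat.zero_add]
          exact he.symm
        | succ m IH =>
          have hocc1 : u = seg t (p (m + 1) + μ) u.length :=
            (occ_fwd (m + 1)).trans (perS (p (m + 1)) u.length).symm
          obtain ⟨j, hj⟩ := occ_bwd _ hocc1
          have h1 : m + e < j := by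
            apply pmono.lt_iff_lt.1
            rw [← hj, IH]
            exact Nat.add_lt_add_right (pmono (Nat.lt_succ_self m)) μ
          have h2 : p (m + e + 1) ≤ p (m + 1) + μ := by
            rw [hj]; exact pmono.monotone h1
          have h3 : p m + μ < p (m + e + 1) := by
            have h4 := pmono (Nat.lt_succ_self (m + e))
            rw [IH] at h4
            exact h4
          have hocc2 : u = seg t (p (m + e + 1) - μ) u.length := by
            have h4 := perS (p (m + e + 1) - μ) u.length
            rw [show p (m + e + 1) - μ + μ = p (m + e + 1) from by omega] at h4
            exact (occ_fwd (m + e + 1)).trans h4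
          obtain ⟨j', hj'⟩ := occ_bwd _ hocc2
          have h5 : m < j' := by
            apply pmono.lt_iff_lt.1
            rw [← hj']
            omega
          have h6 : p (m + 1) ≤ p (m + e + 1) - μ := by
            rw [hj']; exact pmono.monotone h5
          show p (m + 1 + e) = p (m + 1) + μ
          rw [show m + 1 + e = m + e + 1 from by omega]
          omega
      have hVe : ∀ m, V (m + e) = V m := by
        intro m
        have hl1 := hpsucc m
        have hl2 := hpsucc (m + e)
        have hs1 := hshift m
        have hs2 := hshift (m + 1)
        have hlen2 : (V (m + e)).length = (V m).length := by
          rw [show m + 1 + e = m + e + 1 from by omega] at hs2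
          omega
        calc V (m + e) = seg t (p (m + e)) (V (m + e)).length := hVn (m + e)
          _ = seg t (p m + μ) (V m).length := by rw [hs1, hlen2]
          _ = seg t (p m) (V m).length := perS _ _
          _ = V m := (hVn m).symm
      have hde : ∀ m, d (m + e) = d m := fun m => Subtype.ext (hVe m)
      have hdper : ∀ q m, d (m + q * e) = d m := by
        intro q
        induction q with
        | zero => intro m; simp
        | succ q IH =>
          intro m
          rw [show m + (q + 1) * e = (m + q * e) + e from by ring, hde, IH]
      set W : ℕ → List {v : List A // IsReturnWord u t v} := fun _ => seg d 0 e with hWdef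
      have hWlen : ∀ n, (W n).length = e := by
        intro n; rw [hWdef]; exact seg_length _ _ _
      have hfpW : ∀ n, facPos W n = n * e := by
        intro n
        induction n with
        | zero => show facPos W 0 = 0 * e; rw [Nat.zero_mul]; rfl
        | succ n IH =>
          have h1 : facPos W (n + 1) = facPos W n + (W n).length := rfl
          rw [h1, IH, hWlen n]
          ring
      have hWfac : IsFactorizationOf W d := by
        constructor
        · intro n
          apply List.ne_nil_of_length_pos
          rw [hWlen n]
          exact hepos
        · intro n
          rw [factorAt_iff_s14, hfpW n, hWlen n]
          show seg d 0 e = seg d (n * e) e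
          rw [seg_eq_iff]
          intro r hr
          rw [Nat.zero_add, show n * e + r = r + n * e from by ring, hdper n r]
      obtain ⟨i, j, hij⟩ := hc' W hWfac
      exact hij rfl
end

section
/- If x ∈ A^ω is not uniformly recurrent, then there exists a finite coloring of the non-empty factors of x relative to which no factorization of x is monochromatic. -/
variable {A B : Type}

theorem not_uniformly_recurrent_in_P
    (x : ℕ → A) (u : List A) (hu : u ≠ []) (hf : IsFactorOf u x)
    (hnur : ∀ K : ℕ, ∃ m : ℕ, ∀ i < K, ¬ FactorAt u x (m + i)) :
    ∃ (C : Type) (_ : Fintype C) (c : List A → C),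
      ∀ U : ℕ → List A, IsFactorizationOf U x → ∃ i j, c (U i) ≠ c (U j) := by
  classical
  obtain ⟨k₀, hk₀⟩ := hf
  -- x is aperiodic
  have hap : ∀ T, 0 < T → ∃ i, x i ≠ x (T + i) := by
    intro T hT
    by_contra hcon
    push_neg at hcon
    have hper : ∀ k, FactorAt u x (k₀ + k * T) := by
      intro k
      induction k with
      | zero => simpa using hk₀
      | succ k ih =>
        have hstep : ∀ i : ℕ, x (k₀ + (k + 1) * T + i) = x (k₀ + k * T + i) := by
          intro i
          have h1 := hcon (k₀ + k * T + i)
          have h2 : k₀ + (k + 1) * T + i = T + (k₀ + k * T + i) := by ring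
          rw [h2, ← h1]
        exact ih.trans (List.map_congr_left fun i _ => (hstep i).symm)
    obtain ⟨m, hm⟩ := hnur (k₀ + T + 1)
    set k := m / T + 1 with hk
    have hdm := Nat.div_add_mod m T
    have hmod : m % T < T := Nat.mod_lt _ hT
    have hkT : k * T = T * (m / T) + T := by rw [hk]; ring
    have hlt : m < k * T := by omega
    have hle : k * T ≤ m + T := by omega
    have hi : k₀ + k * T - m < k₀ + T + 1 := by omega
    have heq : m + (k₀ + k * T - m) = k₀ + k * T := by omega
    exact hm _ hi (by rw [heq]; exact hper k)
  -- first difference function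
  set D : ℕ → ℕ := fun T => if h : 0 < T then Nat.find (hap T h) else 0 with hDdef
  have hD1 : ∀ T, 0 < T → x (D T) ≠ x (T + D T) := by
    intro T h
    simp only [hDdef, dif_pos h]
    exact Nat.find_spec (hap T h)
  have hD2 : ∀ T, 0 < T → ∀ j < D T, x j = x (T + j) := by
    intro T h j hj
    simp only [hDdef, dif_pos h] at hj
    have := Nat.find_min (hap T h) hj
    push_neg at this
    exact this
  have hD3 : ∀ T, 0 < T → ∀ j, x j ≠ x (T + j) → (∀ i < j, x i = x (T + i)) → D T = j := by
    intro T h j hne hag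
    have hle : D T ≤ j := by
      simp only [hDdef, dif_pos h]
      exact Nat.find_le hne
    rcases eq_or_lt_of_le hle with h1 | h1
    · exact h1
    · exact absurd (hag _ h1) (hD1 T h)
  -- the coloring
  set c : List A → Fin 3 := fun v =>
    if IsPrefixOf v x ∧ v ≠ [] then
      (if WellOrderingRel (x (D v.length)) (x (v.length + D v.length)) then (0 : Fin 3) else 1)
    else 2 with hc
  refine ⟨Fin 3, inferInstance, c, ?_⟩
  intro U hU
  by_contra hmono
  push_neg at hmono
  obtain ⟨hne, hfa⟩ := hU
  have hlen : ∀ n, 0 < (U n).length := fun n => List.length_pos_iff.mpr (hne n)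
  have hpre0 : IsPrefixOf (U 0) x := hfa 0
  have hc2 : ∀ v, ¬(IsPrefixOf v x ∧ v ≠ []) → c v = 2 := by
    intro v h
    simp only [hc]
    rw [if_neg h]
  have hcval : ∀ v, IsPrefixOf v x → v ≠ [] →
      c v = if WellOrderingRel (x (D v.length)) (x (v.length + D v.length)) then (0 : Fin 3)
            else 1 := by
    intro v h1 h2
    simp only [hc]
    rw [if_pos ⟨h1, h2⟩]
  have hc0ne2 : c (U 0) ≠ 2 := by
    rw [hcval _ hpre0 (hne 0)]
    split <;> decide
  have hprefix : ∀ n, IsPrefixOf (U n) x := by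
    intro n
    by_contra hnp
    have h2 : c (U n) = 2 := hc2 _ (by tauto)
    exact hc0ne2 (by rw [hmono 0 n, h2])
  -- extract a common sign
  have hsign : (∀ n, WellOrderingRel (x (D (U n).length)) (x ((U n).length + D (U n).length))) ∨
      (∀ n, WellOrderingRel (x ((U n).length + D (U n).length)) (x (D (U n).length))) := by
    by_cases hs : WellOrderingRel (x (D (U 0).length)) (x ((U 0).length + D (U 0).length))
    · left
      intro n
      have h := hmono n 0
      rw [hcval _ (hprefix n) (hne n), hcval _ hpre0 (hne 0), if_pos hs] at h
      by_contra hq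
      rw [if_neg hq] at h
      exact absurd h (by decide)
    · right
      intro n
      have h := hmono n 0
      rw [hcval _ (hprefix n) (hne n), hcval _ hpre0 (hne 0), if_neg hs] at h
      have hq : ¬ WellOrderingRel (x (D (U n).length)) (x ((U n).length + D (U n).length)) := by
        intro hq
        rw [if_pos hq] at h
        exact absurd h (by decide)
      have hne' : x (D (U n).length) ≠ x ((U n).length + D (U n).length) := hD1 _ (hlen n)
      rcases trichotomous_of WellOrderingRel (x (D (U n).length))
          (x ((U n).length + D (U n).length)) with h' | h' | h'
      · exact absurd h' hq
      · exact absurd h' hne'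
      · exact h'
  obtain ⟨rel, hrT, hrI, hcol⟩ :
      ∃ rel : A → A → Prop, Transitive rel ∧ (∀ a b, rel a b → a ≠ b) ∧
        ∀ n, rel (x (D (U n).length)) (x ((U n).length + D (U n).length)) := by
    rcases hsign with h | h
    · refine ⟨WellOrderingRel, fun a b c' hab hbc => trans_of _ hab hbc, ?_, h⟩
      intro a b hab heq
      subst heq
      exact irrefl_of WellOrderingRel a hab
    · refine ⟨fun a b => WellOrderingRel b a, fun a b c' hab hbc => trans_of _ hbc hab, ?_, h⟩
      intro a b hab heq
      subst heq
      exact irrefl_of WellOrderingRel a hab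
  -- pointwise structure of blocks
  have hpt : ∀ n, ∀ i < (U n).length, x (facPos U n + i) = x i := by
    intro n i hi
    have h3 : ((List.range (U n).length).map fun j => x (facPos U n + j)) =
        (List.range (U n).length).map fun j => x (0 + j) :=
      (hfa n).symm.trans (hprefix n)
    have h4 := congrArg (fun l : List A => l[i]?) h3
    simp only [List.getElem?_map, List.getElem?_range hi, Option.map_some] at h4
    simpa using h4
  have hPpos : ∀ n, 0 < facPos U (n + 1) := by
    intro n
    have := hlen n
    simp only [facPos]
    omega
  -- key descent step
  have key : ∀ n, rel (x (D (facPos U (n+1)))) (x (facPos U (n+1) + D (facPos U (n+1)))) →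
      rel (x (D (facPos U (n+2)))) (x (facPos U (n+2) + D (facPos U (n+2)))) ∧
        D (facPos U (n+2)) < D (facPos U (n+1)) := by
    intro n hinv
    set T := facPos U (n+1) with hT
    set L := (U (n+1)).length with hL
    have hTL : facPos U (n+2) = T + L := rfl
    have hTpos : 0 < T := hPpos n
    have hLpos : 0 < L := hlen (n+1)
    set e := D T with he
    set d := D L with hd
    have hagreeT : ∀ i < e, x i = x (T + i) := hD2 T hTpos
    have hneT : x e ≠ x (T + e) := hD1 T hTpos
    have hagreeL : ∀ i < d, x i = x (L + i) := hD2 L hLpos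
    have hneL : x d ≠ x (L + d) := hD1 L hLpos
    have hcolL : rel (x d) (x (L + d)) := hcol (n+1)
    have hblock : ∀ i < L, x (T + i) = x i := hpt (n+1)
    have heL : L ≤ e := by
      by_contra h
      push_neg at h
      exact hneT ((hblock e h).symm)
    set j := min d (e - L) with hj
    have hagree' : ∀ i < j, x i = x (T + L + i) := by
      intro i hij
      have hi1 : i < d := lt_of_lt_of_le hij (min_le_left _ _)
      have hi2 : L + i < e := by
        have := lt_of_lt_of_le hij (min_le_right _ _)
        omega
      calc x i = x (L + i) := hagreeL i hi1
        _ = x (T + (L + i)) := hagreeT _ hi2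
        _ = x (T + L + i) := by rw [add_assoc]
    have hkey2 : x j ≠ x (T + L + j) ∧ rel (x j) (x (T + L + j)) := by
      rcases lt_trichotomy d (e - L) with hlt | heq | hgt
      · -- j = d
        have hjd : j = d := by omega
        have hLd : L + d < e := by omega
        have h1 : x (T + L + j) = x (L + d) := by
          rw [hjd, show T + L + d = T + (L + d) by ring]
          exact (hagreeT _ hLd).symm
        rw [hjd] at h1 ⊢
        rw [h1]
        exact ⟨hneL, hcolL⟩
      · -- j = d = e - L
        have hjd : j = d := by omega
        have hTLj : T + L + j = T + e := by omega
        have hrel : rel (x j) (x (T + L + j)) := by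
          rw [hTLj, hjd]
          have hLd : L + d = e := by omega
          rw [hLd] at hcolL
          exact hrT hcolL hinv
        exact ⟨hrI _ _ hrel, hrel⟩
      · -- j = e - L
        have hje : j = e - L := by omega
        have h1 : x j = x e := by
          have := hagreeL j (by omega)
          rw [show L + j = e by omega] at this
          exact this
        have h2 : T + L + j = T + e := by omega
        rw [h2, h1]
        exact ⟨hneT, hinv⟩
    have hDeq : D (T + L) = j := hD3 (T + L) (by omega) j hkey2.1 hagree'
    constructor
    · rw [hTL, hDeq]
      exact hkey2.2
    · rw [hTL, hDeq]
      omega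
  have hdesc : ∀ n, rel (x (D (facPos U (n+1)))) (x (facPos U (n+1) + D (facPos U (n+1)))) := by
    intro n
    induction n with
    | zero =>
      have h1 : facPos U 1 = (U 0).length := by simp [facPos]
      rw [h1]
      exact hcol 0
    | succ n ih => exact (key n ih).1
  have hlt : ∀ n, D (facPos U (n+2)) < D (facPos U (n+1)) := fun n => (key n (hdesc n)).2
  have hbound : ∀ n, D (facPos U (n+1)) + n ≤ D (facPos U 1) := by
    intro n
    induction n with
    | zero => simp
    | succ n ih =>
      have h2 := hlt n
      have h3 : facPos U (n + 1 + 1) = facPos U (n + 2) := rfl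
      rw [h3]
      omega
  have := hbound (D (facPos U 1) + 1)
  omega
end

section
/- Let s be a non-periodic infinite word admitting a prefixal factorization s = U₁U₂⋯, and let c be the first letter of s. Then U₁ is not a power of c, i.e., U₁ ∉ c⁺. -/
variable {A B : Type}

theorem first_block_not_power_of_first_letter
    (s : ℕ → A) (hnp : ¬ ∃ p > 0, ∀ n, s (n + p) = s n)
    (U : ℕ → List A) (hU : IsPrefixalFactorizationOf U s) :
    ¬ ∀ b ∈ U 0, b = s 0 := by
  intro hall
  obtain ⟨⟨hne, hfac⟩, hpre⟩ := hU
  -- elementwise facts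
  have hget : ∀ j i (hi : i < (U j).length), (U j)[i] = s (facPos U j + i) := by
    intro j i hi
    have h2 := List.getElem_of_eq (hfac j) hi
    simpa using h2
  have hgetp : ∀ j i (hi : i < (U j).length), (U j)[i] = s i := by
    intro j i hi
    have h2 := List.getElem_of_eq (hpre j) hi
    simpa using h2
  have hlen : ∀ j, 0 < (U j).length := fun j => List.length_pos_iff.mpr (hne j)
  have hmono : ∀ j, facPos U j < facPos U (j + 1) := by
    intro j
    simp [facPos, hlen j]
  have hge : ∀ j, j ≤ facPos U j := by
    intro j
    induction j with
    | zero => simp [facPos]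
    | succ n ih => exact Nat.lt_of_le_of_lt ih (hmono n)
  -- coverage: every position lies in some block
  have hcover : ∀ m : ℕ, ∃ j i, i < (U j).length ∧ m = facPos U j + i := by
    intro m
    have hex : ∃ n, m < facPos U n := ⟨m + 1, Nat.lt_of_lt_of_le (Nat.lt_succ_self m) (hge (m + 1))⟩
    set j := Nat.find hex with hj
    have hjpos : 0 < j := by
      rcases Nat.eq_zero_or_pos j with h0 | h0
      · exfalso
        have := Nat.find_spec hex
        rw [← hj, h0] at this
        simp [facPos] at this
      · exact h0
    obtain ⟨k, hk⟩ := Nat.exists_eq_add_of_lt hjpos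
    have hkj : k + 1 = j := by omega
    have hlt : m < facPos U (k + 1) := by rw [hkj]; exact Nat.find_spec hex
    have hle : facPos U k ≤ m := by
      by_contra hc
      have : j ≤ k := Nat.find_le (Nat.lt_of_not_le hc)
      omega
    refine ⟨k, m - facPos U k, ?_, by omega⟩
    have : facPos U (k + 1) = facPos U k + (U k).length := rfl
    omega
  -- every letter of s equals s 0
  have hall' : ∀ m, s m = s 0 := by
    intro m
    induction m using Nat.strong_induction_on with
    | _ m ih =>
      obtain ⟨j, i, hi, hm⟩ := hcover m
      rcases Nat.eq_zero_or_pos j with h0 | h0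
      · subst h0
        have : facPos U 0 = 0 := rfl
        have hmi : m = i := by omega
        subst hmi
        rw [← hgetp 0 m hi]
        exact hall _ (List.getElem_mem hi)
      · have hpos : 0 < facPos U j := Nat.lt_of_lt_of_le h0 (hge j)
        have h1 : s m = s i := by
          rw [hm, ← hget j i hi, hgetp j i hi]
        rw [h1]
        rcases Nat.eq_zero_or_pos m with hm0 | hm0
        · omega
        · exact ih i (by omega)
  exact hnp ⟨1, Nat.one_pos, fun n => by rw [hall' (n + 1), hall' n]⟩
end

section
/- Let s be a Sturmian word admitting a prefixal factorization s = U₁U₂⋯ into non-empty prefixes of s. Then there exist indices i, j ≥ 1 such that Uᵢ and Uⱼ are rich in different letters (r_s(Uᵢ) ≠ r_s(Uⱼ)). -/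
variable {A B : Type}

/-- `s` is not ultimately periodic. -/
def Aperiodic (s : ℕ → Bool) : Prop :=
  ¬ ∃ (N p : ℕ), 0 < p ∧ ∀ n, N ≤ n → s (n + p) = s n

/-- `s` is balanced: counts of each letter in equal-length factors differ by at most 1. -/
def IsBalanced (s : ℕ → Bool) : Prop :=
  ∀ u v : List Bool, IsFactorOf u s → IsFactorOf v s → u.length = v.length →
    ∀ z : Bool, ((u.count z : ℤ) - (v.count z : ℤ)).natAbs ≤ 1

/-- `w` is rich in the letter `z` (relative to the Sturmian word `s`). -/
def RichIn (s : ℕ → Bool) (w : List Bool) (z : Bool) : Prop :=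
  ∃ v : List Bool, IsFactorOf v s ∧ v.length = w.length ∧ v.count z < w.count z





/-- window of `s` of length `n` starting at `q` -/
def win (s : ℕ → Bool) (q n : ℕ) : List Bool := (List.range n).map fun i => s (q + i)

def cnt (s : ℕ → Bool) (z : Bool) (q n : ℕ) : ℕ := ((win s q n).count z)

@[simp] lemma win_length (s : ℕ → Bool) (q n : ℕ) : (win s q n).length = n := by
  simp [win]

lemma win_isFactor (s : ℕ → Bool) (q n : ℕ) : IsFactorOf (win s q n) s := by
  exact ⟨q, by simp [FactorAt, win]⟩

lemma win_add (s : ℕ → Bool) (q a b : ℕ) :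
    win s q (a + b) = win s q a ++ win s (q + a) b := by
  unfold win
  rw [List.range_add, List.map_append, List.map_map]
  congr 1
  apply List.map_congr_left
  intro i _
  simp [Function.comp]
  ring_nf

lemma cnt_add (s : ℕ → Bool) (z : Bool) (q a b : ℕ) :
    cnt s z q (a + b) = cnt s z q a + cnt s z (q + a) b := by
  unfold cnt
  rw [win_add, List.count_append]

lemma win_take (s : ℕ → Bool) (q : ℕ) {i n : ℕ} (h : i ≤ n) :
    (win s q n).take i = win s q i := by
  unfold win
  rw [← List.map_take, List.take_range, Nat.min_eq_left h]

lemma cnt_one (s : ℕ → Bool) (z : Bool) (q : ℕ) :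
    cnt s z q 1 = if s q == z then 1 else 0 := by
  cases hs : s q <;> cases z <;> simp [cnt, win, List.range_succ, hs]

lemma cnt_true_add_false (s : ℕ → Bool) (q n : ℕ) :
    cnt s true q n + cnt s false q n = n := by
  induction n with
  | zero => simp [cnt, win]
  | succ n ih =>
      have h1 := cnt_add s true q n 1
      have h2 := cnt_add s false q n 1
      have := cnt_one s true (q + n)
      have := cnt_one s false (q + n)
      cases hs : s (q + n) <;> simp_all <;> omega

lemma cnt_le_cnt_add_one {s : ℕ → Bool} (hbal : IsBalanced s) (z : Bool) (q q' n : ℕ) :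
    cnt s z q n ≤ cnt s z q' n + 1 := by
  have h := hbal (win s q n) (win s q' n) (win_isFactor s q n) (win_isFactor s q' n)
    (by simp) z
  unfold cnt
  omega

/-- minimal count of `z` among windows of length `n` -/
noncomputable def mv (s : ℕ → Bool) (z : Bool) (n : ℕ) : ℕ :=
  sInf {v : ℕ | ∃ q, cnt s z q n = v}

lemma mv_le (s : ℕ → Bool) (z : Bool) (q n : ℕ) : mv s z n ≤ cnt s z q n :=
  Nat.sInf_le ⟨q, rfl⟩

lemma exists_cnt_eq_mv (s : ℕ → Bool) (z : Bool) (n : ℕ) :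
    ∃ q, cnt s z q n = mv s z n :=
  Nat.sInf_mem (⟨cnt s z 0 n, 0, rfl⟩ : {v : ℕ | ∃ q, cnt s z q n = v}.Nonempty)

lemma cnt_le_mv_add_one {s : ℕ → Bool} (hbal : IsBalanced s) (z : Bool) (q n : ℕ) :
    cnt s z q n ≤ mv s z n + 1 := by
  obtain ⟨q', hq'⟩ := exists_cnt_eq_mv s z n
  have := cnt_le_cnt_add_one hbal z q q' n
  omega

lemma mv_superadd (s : ℕ → Bool) (z : Bool) (a b : ℕ) :
    mv s z a + mv s z b ≤ mv s z (a + b) := by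
  obtain ⟨q, hq⟩ := exists_cnt_eq_mv s z (a + b)
  rw [cnt_add] at hq
  have h1 := mv_le s z q a
  have h2 := mv_le s z (q + a) b
  omega

lemma mv_subadd {s : ℕ → Bool} (hbal : IsBalanced s) (z : Bool) (a b : ℕ) :
    mv s z (a + b) ≤ mv s z a + mv s z b + 1 := by
  obtain ⟨q, hq⟩ := exists_cnt_eq_mv s z a
  have h1 : mv s z (a + b) ≤ cnt s z q (a + b) := mv_le s z q (a + b)
  rw [cnt_add] at h1
  have h2 := cnt_le_mv_add_one hbal z (q + a) b
  omega

lemma mv_mul_lower (s : ℕ → Bool) (z : Bool) (k n : ℕ) :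
    k * mv s z n ≤ mv s z (k * n) := by
  induction k with
  | zero => simp
  | succ k ih =>
      have h := mv_superadd s z (k * n) n
      have : (k + 1) * n = k * n + n := by ring
      rw [this]
      calc (k + 1) * mv s z n = k * mv s z n + mv s z n := by ring
        _ ≤ mv s z (k * n) + mv s z n := by omega
        _ ≤ _ := h

lemma mv_mul_upper {s : ℕ → Bool} (hbal : IsBalanced s) (z : Bool) (n k : ℕ) :
    mv s z ((n + 1) * k) ≤ (n + 1) * mv s z k + n := by
  induction n with
  | zero => simp
  | succ n ih =>
      have hsplit : (n + 1 + 1) * k = (n + 1) * k + k := by ring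
      rw [hsplit]
      have h := mv_subadd hbal z ((n + 1) * k) k
      have : (n + 1 + 1) * mv s z k = (n + 1) * mv s z k + mv s z k := by ring
      omega

lemma mv_key {s : ℕ → Bool} (hbal : IsBalanced s) (z : Bool) {n k : ℕ} (hn : 1 ≤ n) :
    k * mv s z n ≤ n * mv s z k + n := by
  obtain ⟨n', rfl⟩ : ∃ n', n = n' + 1 := ⟨n - 1, by omega⟩
  have h1 := mv_mul_lower s z k (n' + 1)
  have h2 := mv_mul_upper hbal z n' k
  have : k * (n' + 1) = (n' + 1) * k := by ring
  rw [this] at h1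
  omega

/-- slope of `s` with respect to letter `z` -/
noncomputable def alp (s : ℕ → Bool) (z : Bool) : ℝ :=
  ⨆ n : ℕ, (mv s z n : ℝ) / n

lemma mv_zero (s : ℕ → Bool) (z : Bool) : mv s z 0 = 0 := by
  have := mv_le s z 0 0
  simpa [cnt, win] using this

lemma alp_bdd {s : ℕ → Bool} (hbal : IsBalanced s) (z : Bool) :
    BddAbove (Set.range fun n : ℕ => (mv s z n : ℝ) / n) := by
  refine ⟨(mv s z 1 : ℝ) + 1, ?_⟩
  rintro x ⟨n, rfl⟩
  rcases Nat.eq_zero_or_pos n with h | h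
  · subst h; simp; positivity
  · have hk := mv_key hbal z (k := 1) (n := n) h
    rw [div_le_iff₀ (by exact_mod_cast h)]
    have hk' : (1:ℝ) * (mv s z n : ℝ) ≤ n * (mv s z 1 : ℝ) + n := by exact_mod_cast hk
    nlinarith [hk']

lemma mv_le_alp_mul {s : ℕ → Bool} (hbal : IsBalanced s) (z : Bool) (n : ℕ) :
    (mv s z n : ℝ) ≤ n * alp s z := by
  rcases Nat.eq_zero_or_pos n with h | h
  · subst h; simp [mv_zero]
  · have h1 : (mv s z n : ℝ) / n ≤ alp s z :=
      le_ciSup (alp_bdd hbal z) n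
    have hn : (0:ℝ) < n := by exact_mod_cast h
    rw [div_le_iff₀ hn] at h1
    linarith [h1]

lemma alp_mul_le {s : ℕ → Bool} (hbal : IsBalanced s) (z : Bool) {n : ℕ} (hn : 1 ≤ n) :
    (n : ℝ) * alp s z ≤ (mv s z n : ℝ) + 1 := by
  have hnR : (0:ℝ) < n := by exact_mod_cast hn
  have h : alp s z ≤ ((mv s z n : ℝ) + 1) / n := by
    apply ciSup_le
    intro t
    rcases Nat.eq_zero_or_pos t with ht | ht
    · subst ht; simp; positivity
    · have htR : (0:ℝ) < t := by exact_mod_cast ht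
      rw [div_le_div_iff₀ htR hnR]
      have hk := mv_key hbal z (k := n) (n := t) ht
      have hk' : (n:ℝ) * (mv s z t : ℝ) ≤ (t:ℝ) * (mv s z n : ℝ) + t := by exact_mod_cast hk
      nlinarith [hk']
  rw [le_div_iff₀ hnR] at h
  linarith [h]

/-- discrepancy of the prefix of length q -/
noncomputable def fd (s : ℕ → Bool) (z : Bool) (q : ℕ) : ℝ :=
  (cnt s z 0 q : ℝ) - q * alp s z

@[simp] lemma fd_zero (s : ℕ → Bool) (z : Bool) : fd s z 0 = 0 := by
  simp [fd, cnt, win]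

lemma fd_window (s : ℕ → Bool) (z : Bool) (q n : ℕ) :
    fd s z (q + n) - fd s z q = (cnt s z q n : ℝ) - n * alp s z := by
  have h : cnt s z 0 (q + n) = cnt s z 0 q + cnt s z q n := by
    have := cnt_add s z 0 q n
    simpa using this
  unfold fd
  rw [h]
  push_cast
  ring

lemma fd_diff_le {s : ℕ → Bool} (hbal : IsBalanced s) (z : Bool) (q n : ℕ) :
    fd s z (q + n) - fd s z q ≤ 1 := by
  rcases Nat.eq_zero_or_pos n with h | h
  · subst h; simp
  · rw [fd_window]
    have h1 : (cnt s z q n : ℝ) ≤ (mv s z n : ℝ) + 1 := by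
      exact_mod_cast cnt_le_mv_add_one hbal z q n
    have h2 := mv_le_alp_mul hbal z n
    linarith

lemma fd_diff_ge {s : ℕ → Bool} (hbal : IsBalanced s) (z : Bool) (q n : ℕ) :
    -1 ≤ fd s z (q + n) - fd s z q := by
  rcases Nat.eq_zero_or_pos n with h | h
  · subst h; simp
  · rw [fd_window]
    have h1 : (mv s z n : ℝ) ≤ (cnt s z q n : ℝ) := by
      exact_mod_cast mv_le s z q n
    have h2 := alp_mul_le hbal z h
    linarith

lemma fd_le_one {s : ℕ → Bool} (hbal : IsBalanced s) (z : Bool) (q : ℕ) :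
    fd s z q ≤ 1 := by
  have := fd_diff_le hbal z 0 q
  simpa using this

lemma fd_sub_le {s : ℕ → Bool} (hbal : IsBalanced s) (z : Bool) {a b : ℕ} (h : a ≤ b) :
    fd s z a - fd s z b ≤ 1 := by
  obtain ⟨n, rfl⟩ : ∃ n, b = a + n := ⟨b - a, by omega⟩
  have := fd_diff_ge hbal z a n
  linarith


lemma letter_eq_of_cnt_eq {s : ℕ → Bool} {z : Bool} {q n : ℕ}
    (h : cnt s z q n = cnt s z (q + 1) n) : s (q + n) = s q := by
  have h1 := cnt_add s z q n 1
  have h2 := cnt_add s z q 1 n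
  rw [Nat.add_comm 1 n] at h2
  have h3 : cnt s z (q + n) 1 = cnt s z q 1 := by omega
  rw [cnt_one, cnt_one] at h3
  cases hs1 : s (q + n) <;> cases hs2 : s q <;> cases z <;> simp_all

lemma strict {s : ℕ → Bool} (hap : Aperiodic s) (hbal : IsBalanced s) (z : Bool)
    {n : ℕ} (hn : 1 ≤ n) :
    (n : ℝ) * alp s z < (mv s z n : ℝ) + 1 := by
  rcases lt_or_eq_of_le (alp_mul_le hbal z hn) with h | heq
  · exact h
  exfalso
  have drop : ∀ q, fd s z (q + n) ≤ fd s z q := by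
    intro q
    have hw := fd_window s z q n
    have hc : (cnt s z q n : ℝ) ≤ (mv s z n : ℝ) + 1 := by
      exact_mod_cast cnt_le_mv_add_one hbal z q n
    linarith
  have chain : ∀ q j, fd s z (q + j * n) ≤ fd s z q := by
    intro q j
    induction j with
    | zero => simp
    | succ j ih =>
        have : q + (j + 1) * n = (q + j * n) + n := by ring
        rw [this]
        exact le_trans (drop _) ih
  have lightdrop : ∀ q, cnt s z q n = mv s z n → fd s z (q + n) = fd s z q - 1 := by
    intro q hq
    have hw := fd_window s z q n
    rw [hq] at hw
    linarith
  have key2 : ∀ q q' : ℕ, cnt s z q n = mv s z n → cnt s z q' n = mv s z n →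
      q < q' → q % n = q' % n → False := by
    intro q q' hl1 hl2 hq hmod
    have hdvd : n ∣ q' - q := (Nat.modEq_iff_dvd' hq.le).mp hmod
    obtain ⟨c, hc⟩ := hdvd
    rcases Nat.eq_zero_or_pos c with rfl | hcpos
    · omega
    obtain ⟨c', rfl⟩ : ∃ c', c = c' + 1 := ⟨c - 1, by omega⟩
    have h1 : fd s z q' ≤ fd s z (q + n) := by
      have hrw : q' = (q + n) + c' * n := by
        have hnc : n * (c' + 1) = c' * n + n := by ring
        omega
      rw [hrw]
      exact chain _ _
    have h2 : fd s z (q + n) = fd s z q - 1 := lightdrop q hl1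
    have h3 : fd s z (q' + n) = fd s z q' - 1 := lightdrop q' hl2
    have h4 : fd s z q - fd s z (q' + n) ≤ 1 := fd_sub_le hbal z (by omega)
    linarith
  have claim : ∃ Q, ∀ q, Q ≤ q → cnt s z q n ≠ mv s z n := by
    by_contra hcon
    push_neg at hcon
    choose g hg1 hg2 using hcon
    set F : ℕ → ℕ := fun i => Nat.rec (g 0) (fun _ prev => g (prev + 1)) i with hF
    have hFlight : ∀ i, cnt s z (F i) n = mv s z n := by
      intro i
      cases i with
      | zero => exact hg2 0
      | succ i => exact hg2 _
    have hFmono : StrictMono F := by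
      apply strictMono_nat_of_lt_succ
      intro i
      have := hg1 (F i + 1)
      have hFs : F (i + 1) = g (F i + 1) := rfl
      omega
    obtain ⟨i, j, hij, hres⟩ :=
      Fintype.exists_ne_map_eq_of_card_lt
        (fun i : Fin (n + 1) => (⟨F i % n, Nat.mod_lt _ hn⟩ : Fin n)) (by simp)
    have hres' : F (i : ℕ) % n = F (j : ℕ) % n := by
      have := congrArg Fin.val hres
      simpa using this
    rcases lt_or_gt_of_ne (fun h : (i:ℕ) = (j:ℕ) => hij (Fin.ext h)) with hlt | hlt
    · exact key2 _ _ (hFlight i) (hFlight j) (hFmono hlt) hres'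
    · exact key2 _ _ (hFlight j) (hFlight i) (hFmono hlt) hres'.symm
  obtain ⟨Q, hQ⟩ := claim
  have hconst : ∀ q, Q ≤ q → cnt s z q n = mv s z n + 1 := by
    intro q hq
    have h1 := mv_le s z q n
    have h2 := cnt_le_mv_add_one hbal z q n
    have h3 := hQ q hq
    omega
  exact hap ⟨Q, n, hn, fun q hq =>
    letter_eq_of_cnt_eq (by rw [hconst q hq, hconst (q + 1) (by omega)])⟩






lemma core {s : ℕ → Bool} (hap : Aperiodic s) (hbal : IsBalanced s) (z : Bool)
    {U : ℕ → List Bool} (hU : IsPrefixalFactorizationOf U s) :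
    ¬ ∀ k, mv s z ((U k).length) + 1 ≤ cnt s z 0 ((U k).length) := by
  intro hAll
  obtain ⟨⟨hne, hocc⟩, hpre⟩ := hU
  set L := facPos U with hL
  have hlen : ∀ k, 1 ≤ (U k).length := fun k =>
    Nat.one_le_iff_ne_zero.mpr (fun h => hne k (List.length_eq_zero_iff.mp h))
  have hwin0 : ∀ k, U k = win s 0 ((U k).length) := fun k => hpre k
  have hwinL : ∀ k, U k = win s (L k) ((U k).length) := fun k => hocc k
  have hcnt : ∀ k, ∀ i ≤ (U k).length, cnt s z (L k) i = cnt s z 0 i := by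
    intro k i hi
    have h : win s (L k) ((U k).length) = win s 0 ((U k).length) :=
      (hwinL k).symm.trans (hwin0 k)
    have h2 := congrArg (fun l => (l.take i).count z) h
    rw [win_take s _ hi, win_take s _ hi] at h2
    exact h2
  have hfd : ∀ k, ∀ i ≤ (U k).length, fd s z (L k + i) = fd s z (L k) + fd s z i := by
    intro k i hi
    have h1 := fd_window s z (L k) i
    have h2 := fd_window s z 0 i
    rw [hcnt k i hi] at h1
    simp only [Nat.zero_add, fd_zero, sub_zero] at h2
    linarith
  have hLsucc : ∀ k, L (k + 1) = L k + (U k).length := fun k => rfl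
  have hfdL : ∀ k, fd s z (L (k + 1)) = fd s z (L k) + fd s z ((U k).length) := by
    intro k
    rw [hLsucc]
    exact hfd k _ le_rfl
  have hpos : ∀ m, 1 ≤ m → mv s z m + 1 ≤ cnt s z 0 m → 0 < fd s z m := by
    intro m hm hh
    have hst := strict hap hbal z hm
    have hc : (mv s z m : ℝ) + 1 ≤ (cnt s z 0 m : ℝ) := by exact_mod_cast hh
    have hfdm : fd s z m = (cnt s z 0 m : ℝ) - m * alp s z := rfl
    rw [hfdm]
    linarith
  have hposk : ∀ k, 0 < fd s z ((U k).length) := fun k => hpos _ (hlen k) (hAll k)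
  have hL0 : fd s z (L 0) = 0 := by
    have : L 0 = 0 := rfl
    rw [this, fd_zero]
  have hmono : ∀ k, fd s z (L k) ≤ fd s z (L (k + 1)) := by
    intro k
    rw [hfdL]
    linarith [hposk k]
  have hlb : ∀ k, 1 ≤ k → fd s z ((U 0).length) ≤ fd s z (L k) := by
    intro k hk
    induction k with
    | zero => omega
    | succ k ih =>
        rcases Nat.eq_zero_or_pos k with rfl | hk'
        · rw [hfdL 0, hL0, zero_add]
        · exact le_trans (ih hk') (hmono k)
  by_cases hB : ∃ B, ∀ k, 1 ≤ k → (U k).length ≤ B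
  · obtain ⟨B, hBk⟩ := hB
    classical
    set T := ((Finset.Icc 1 B).filter
      (fun t => mv s z t + 1 ≤ cnt s z 0 t)).image (fun t => fd s z t) with hT
    have hmem : ∀ k, 1 ≤ k → fd s z ((U k).length) ∈ T := by
      intro k hk
      apply Finset.mem_image_of_mem
      rw [Finset.mem_filter, Finset.mem_Icc]
      exact ⟨⟨hlen k, hBk k hk⟩, hAll k⟩
    have hTne : T.Nonempty := ⟨_, hmem 1 le_rfl⟩
    set δ := T.min' hTne with hδ
    have hδle : ∀ k, 1 ≤ k → δ ≤ fd s z ((U k).length) :=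
      fun k hk => Finset.min'_le _ _ (hmem k hk)
    have hδpos : 0 < δ := by
      have hm := T.min'_mem hTne
      obtain ⟨t, ht, hfdt⟩ := Finset.mem_image.mp hm
      rw [Finset.mem_filter, Finset.mem_Icc] at ht
      rw [hδ, ← hfdt]
      exact hpos t ht.1.1 ht.2
    have hgrow : ∀ N : ℕ, (N : ℝ) * δ ≤ fd s z (L (N + 1)) := by
      intro N
      induction N with
      | zero =>
          rw [hfdL 0, hL0, zero_add]
          simpa using le_of_lt (hposk 0)
      | succ N ih =>
          rw [hfdL (N + 1)]
          have h := hδle (N + 1) (by omega)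
          push_cast
          linarith
    obtain ⟨N, hN⟩ := exists_nat_gt (1 / δ)
    have h1 : fd s z (L (N + 1)) ≤ 1 := fd_le_one hbal z _
    have h2 := hgrow N
    rw [div_lt_iff₀ hδpos] at hN
    linarith
  · push_neg at hB
    have hbdd : BddAbove (Set.range (fd s z)) := by
      refine ⟨1, ?_⟩
      rintro x ⟨q, rfl⟩
      exact fd_le_one hbal z q
    set S := ⨆ q, fd s z q with hS
    have hub : ∀ i, fd s z i ≤ S - fd s z ((U 0).length) := by
      intro i
      obtain ⟨k, hk1, hki⟩ := hB i
      have hle : i ≤ (U k).length := le_of_lt hki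
      have h1 := hfd k i hle
      have h2 : fd s z (L k + i) ≤ S := le_ciSup hbdd _
      have h3 := hlb k hk1
      linarith
    have hfin : S ≤ S - fd s z ((U 0).length) := ciSup_le hub
    linarith [hposk 0]

theorem sturmian_prefixal_factorization_not_equally_rich
    (s : ℕ → Bool) (hap : Aperiodic s) (hbal : IsBalanced s)
    (U : ℕ → List Bool) (hU : IsPrefixalFactorizationOf U s) :
    ∃ (i j : ℕ) (z : Bool), RichIn s (U i) z ∧ RichIn s (U j) (!z) := by
  have hne := hU.1.1
  have hpre := hU.2
  have hlen : ∀ k, 1 ≤ (U k).length := fun k =>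
    Nat.one_le_iff_ne_zero.mpr (fun h => hne k (List.length_eq_zero_iff.mp h))
  have hdich : ∀ k, (∃ q, cnt s true q (U k).length < cnt s true 0 (U k).length) ∨
      (∃ q, cnt s false q (U k).length < cnt s false 0 (U k).length) := by
    intro k
    have hne' : ∃ q, cnt s true q (U k).length ≠ cnt s true 0 (U k).length := by
      by_contra hcon
      push_neg at hcon
      refine hap ⟨0, (U k).length, hlen k, fun q _ => ?_⟩
      exact letter_eq_of_cnt_eq ((hcon q).trans (hcon (q + 1)).symm)
    obtain ⟨q, hq⟩ := hne'
    rcases Nat.lt_or_ge (cnt s true q (U k).length) (cnt s true 0 (U k).length) with h | h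
    · exact Or.inl ⟨q, h⟩
    · refine Or.inr ⟨q, ?_⟩
      have h1 := cnt_true_add_false s q (U k).length
      have h2 := cnt_true_add_false s 0 (U k).length
      omega
  have hcore : ∀ z : Bool, ∃ k, ¬ (mv s z (U k).length + 1 ≤ cnt s z 0 (U k).length) := by
    intro z
    by_contra hcon
    push_neg at hcon
    exact core hap hbal z hU (fun k => hcon k)
  obtain ⟨k₀, hk₀⟩ := hcore true
  obtain ⟨k₁, hk₁⟩ := hcore false
  have hH : ∀ k (z : Bool), (∃ q, cnt s z q (U k).length < cnt s z 0 (U k).length) →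
      mv s z (U k).length + 1 ≤ cnt s z 0 (U k).length := by
    rintro k z ⟨q, hq⟩
    have := mv_le s z q (U k).length
    omega
  have hfk₀ : ∃ q, cnt s false q (U k₀).length < cnt s false 0 (U k₀).length := by
    rcases hdich k₀ with h | h
    · exact absurd (hH _ _ h) hk₀
    · exact h
  have htk₁ : ∃ q, cnt s true q (U k₁).length < cnt s true 0 (U k₁).length := by
    rcases hdich k₁ with h | h
    · exact h
    · exact absurd (hH _ _ h) hk₁
  have hrich : ∀ k (z : Bool),
      (∃ q, cnt s z q (U k).length < cnt s z 0 (U k).length) → RichIn s (U k) z := by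
    rintro k z ⟨q, hq⟩
    refine ⟨win s q (U k).length, win_isFactor s q _, by simp, ?_⟩
    have h0 : U k = win s 0 ((U k).length) := hpre k
    calc (win s q (U k).length).count z = cnt s z q (U k).length := rfl
      _ < cnt s z 0 (U k).length := hq
      _ = (U k).count z := by
          conv_rhs => rw [h0]
          rfl
  exact ⟨k₁, k₀, true, hrich k₁ true htk₁, by simpa using hrich k₀ false hfk₀⟩
end
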